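/- arXiv:cs/0412062 — 19 statements merged into one kernel-verified Lean document; each statement's English description precedes it below -/
import Mathlib

section
/- Let V be a finite set of variables and let f and g be Boolean functions over V. Then f is isomorphic to g if and only if f isomorphically implies g and g isomorphically implies f. -/
/-- Cardinality of the satisfying set is invariant under permuting variables. -/
lemma perm_card {V : Type*} [Fintype V] [DecidableEq V] (f : (V → Bool) → Bool) (π : Equiv.Perm V) :
    (Finset.univ.filter (fun a : V → Bool => f (a ∘ π) = true)).card =
      (Finset.univ.filter (fun a : V → Bool => f a = true)).card := by
  classical
  haveI := Classical.decEq V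
  apply Finset.card_bij' (fun a _ => a ∘ π) (fun b _ => b ∘ ⇑π⁻¹)
  · intro a ha
    simp only [Finset.mem_filter, Finset.mem_univ, true_and] at ha ⊢
    exact ha
  · intro b hb
    simp only [Finset.mem_filter, Finset.mem_univ, true_and] at hb ⊢
    have : (b ∘ ⇑π⁻¹) ∘ ⇑π = b := by
      funext x; simp [Function.comp]
    rw [this]; exact hb
  · intro a _
    funext x; simp [Function.comp]
  · intro b _
    funext x; simp [Function.comp]

/-- For Boolean functions `f`, `g` over a finite variable set `V`,
`f` is isomorphic to `g` iff `f` isomorphically implies `g` and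
`g` isomorphically implies `f`. -/
theorem stmt_0 {V : Type*} [Fintype V] (f g : (V → Bool) → Bool) :
    (∃ π : Equiv.Perm V, (fun a => f (a ∘ π)) = g) ↔
      ((∃ π : Equiv.Perm V, ∀ a : V → Bool, f (a ∘ π) = true → g a = true) ∧
       (∃ π : Equiv.Perm V, ∀ a : V → Bool, g (a ∘ π) = true → f a = true)) := by
  classical
  haveI := Classical.decEq V
  constructor
  · rintro ⟨π, h⟩
    refine ⟨⟨π, fun a ha => by rw [← congrFun h a]; exact ha⟩,
           ⟨π⁻¹, fun a ha => ?_⟩⟩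
    have h2 := congrFun h (a ∘ ⇑π⁻¹)
    have heq : (a ∘ ⇑π⁻¹) ∘ ⇑π = a := by funext x; simp [Function.comp]
    rw [heq] at h2
    rw [h2]; exact ha
  · rintro ⟨⟨π, h1⟩, ⟨σ, h2⟩⟩
    refine ⟨π, funext fun a => ?_⟩
    -- cardinality argument
    set Sf := Finset.univ.filter (fun a : V → Bool => f a = true) with hSf
    set Sg := Finset.univ.filter (fun a : V → Bool => g a = true) with hSg
    have sub1 : Finset.univ.filter (fun a : V → Bool => f (a ∘ π) = true) ⊆ Sg := by
      intro a ha
      simp only [Finset.mem_filter, Finset.mem_univ, true_and, hSg] at ha ⊢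
      exact h1 a ha
    have sub2 : Finset.univ.filter (fun a : V → Bool => g (a ∘ σ) = true) ⊆ Sf := by
      intro a ha
      simp only [Finset.mem_filter, Finset.mem_univ, true_and, hSf] at ha ⊢
      exact h2 a ha
    have c1 : Sf.card ≤ Sg.card := by
      have := Finset.card_le_card sub1
      rwa [perm_card f π] at this
    have c2 : Sg.card ≤ Sf.card := by
      have := Finset.card_le_card sub2
      rwa [perm_card g σ] at this
    have hcard : (Finset.univ.filter (fun a : V → Bool => f (a ∘ π) = true)).card = Sg.card := by
      rw [perm_card f π, ← hSf]; omega
    have heq : Finset.univ.filter (fun a : V → Bool => f (a ∘ π) = true) = Sg :=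
      Finset.eq_of_subset_of_card_le sub1 (le_of_eq hcard.symm)
    have := Finset.ext_iff.mp heq a
    simp only [Finset.mem_filter, Finset.mem_univ, true_and, hSg] at this
    cases hfa : f (a ∘ ⇑π)
    · cases hga : g a
      · rfl
      · exact absurd (this.mpr hga) (by simp [hfa])
    · exact (this.mp hfa).symm
end

section
/- Let G and H be simple graphs on the same finite vertex set V, each without isolated vertices. Then G contains a subgraph isomorphic to H if and only if F_G isomorphically implies F_H. -/
/-- For simple graphs `G`, `H` on the same finite vertex set `V`,
each without isolated vertices, `G` contains a subgraph isomorphic to `H`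
iff `F_G` isomorphically implies `F_H`. -/
theorem stmt_1 {V : Type*} [Fintype V] (G H : SimpleGraph V)
    (hG : ∀ v : V, ∃ w : V, G.Adj v w)
    (hH : ∀ v : V, ∃ w : V, H.Adj v w)
    (FG FH : (V → Bool) → Bool)
    (hFG : ∀ a : V → Bool, FG a = true ↔ ∀ i j : V, G.Adj i j → (a i = true ∨ a j = true))
    (hFH : ∀ a : V → Bool, FH a = true ↔ ∀ i j : V, H.Adj i j → (a i = true ∨ a j = true)) :
    (∃ φ : V → V, Function.Injective φ ∧ ∀ u v : V, H.Adj u v → G.Adj (φ u) (φ v)) ↔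
      (∃ π : Equiv.Perm V, ∀ a : V → Bool, FG (a ∘ π) = true → FH a = true) := by
  constructor
  · rintro ⟨φ, hinj, hadj⟩
    have hbij : Function.Bijective φ := (Finite.injective_iff_bijective).mp hinj
    let e : V ≃ V := Equiv.ofBijective φ hbij
    refine ⟨e.symm, fun a ha => ?_⟩
    rw [hFG] at ha
    rw [hFH]
    intro u v huv
    have h1 := ha (φ u) (φ v) (hadj u v huv)
    have heu : e.symm (φ u) = u := e.symm_apply_apply u
    have hev : e.symm (φ v) = v := e.symm_apply_apply v
    simpa [Function.comp, heu, hev] using h1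
  · rintro ⟨π, hπ⟩
    classical
    refine ⟨π.symm, π.symm.injective, fun u v huv => ?_⟩
    by_contra hne
    set a : V → Bool := fun x => decide (x ≠ u ∧ x ≠ v) with ha
    have hFGa : FG (a ∘ π) = true := by
      rw [hFG]
      intro i j hij
      by_contra hcon
      push_neg at hcon
      obtain ⟨h1, h2⟩ := hcon
      simp only [Function.comp, ha, decide_eq_true_eq, Bool.not_eq_true,
        decide_eq_false_iff_not, not_and_or, not_not] at h1 h2
      have hij' : i ≠ j := hij.ne
      rcases h1 with h1 | h1 <;> rcases h2 with h2 | h2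
      · exact hij' (π.injective (h1.trans h2.symm))
      · apply hne
        have : i = π.symm u := by rw [← h1, Equiv.symm_apply_apply]
        have : j = π.symm v := by rw [← h2, Equiv.symm_apply_apply]
        rw [show π.symm u = i by rw [← h1, Equiv.symm_apply_apply],
           show π.symm v = j by rw [← h2, Equiv.symm_apply_apply]]
        exact hij
      · apply hne
        rw [show π.symm u = j by rw [← h2, Equiv.symm_apply_apply],
           show π.symm v = i by rw [← h1, Equiv.symm_apply_apply]]
        exact hij.symm
      · exact hij' (π.injective (h1.trans h2.symm))
    have hFHa := hπ a hFGa
    rw [hFH] at hFHa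
    have := hFHa u v huv
    simp [ha] at this
end

section
/- Let V be a finite set of variables, X ⊆ V, and let f and g be Boolean functions over V that both depend only on the variables in X. If there exists a permutation π of V with π(f) ⇒ g, then there exists a permutation ρ of V that fixes every element of V \ X such that ρ(f) ⇒ g. -/
/-- If `f`, `g` over finite `V` depend only on `X ⊆ V` and some permutation
`π` of `V` satisfies `π(f) ⇒ g`, then some permutation `ρ` of `V` fixing `V \ X`
pointwise satisfies `ρ(f) ⇒ g`. -/
theorem stmt_2 {V : Type*} [Fintype V] (X : Set V) (f g : (V → Bool) → Bool)
    (hf : ∀ a b : V → Bool, (∀ x ∈ X, a x = b x) → f a = f b)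
    (hg : ∀ a b : V → Bool, (∀ x ∈ X, a x = b x) → g a = g b)
    (h : ∃ π : Equiv.Perm V, ∀ a : V → Bool, f (a ∘ π) = true → g a = true) :
    ∃ ρ : Equiv.Perm V, (∀ v : V, v ∉ X → ρ v = v) ∧
      ∀ a : V → Bool, f (a ∘ ρ) = true → g a = true := by
  classical
  obtain ⟨π, hπ⟩ := h
  set S : Set V := {v | v ∈ X ∧ π v ∈ X} with hS
  set T : Set V := {v | v ∈ X ∧ π v ∉ X} with hT
  set U : Set V := X \ (π '' S) with hU
  have hSX : S ⊆ X := fun v hv => hv.1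
  have hπSX : π '' S ⊆ X := by rintro _ ⟨v, hv, rfl⟩; exact hv.2
  have hUX : U ⊆ X := fun v hv => hv.1
  have hTU : T = X \ S := by ext v; simp only [hS, hT, Set.mem_setOf_eq, Set.mem_diff]; tauto
  have hcard : Nat.card T = Nat.card U := by
    have h1 : Set.ncard T = X.ncard - S.ncard := by rw [hTU, Set.ncard_diff hSX]
    have h2 : Set.ncard U = X.ncard - (π '' S).ncard := Set.ncard_diff hπSX
    have h3 : (π '' S).ncard = S.ncard := Set.ncard_image_of_injective _ π.injective
    rw [Nat.card_coe_set_eq, Nat.card_coe_set_eq, h1, h2, h3]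
  obtain ⟨τ⟩ : Nonempty (T ≃ U) := Finite.card_eq.mp hcard
  set ρf : V → V := fun v =>
    if hv : v ∈ S then π v else if hv : v ∈ T then (τ ⟨v, hv⟩ : V) else v with hρf
  have hρS : ∀ v ∈ S, ρf v = π v := fun v hv => dif_pos hv
  have hρT : ∀ (v) (hv : v ∈ T), ρf v = (τ ⟨v, hv⟩ : V) := by
    intro v hv
    have hs : v ∉ S := fun hs => hv.2 hs.2
    simp [hρf, hs, hv]
  have hρfix : ∀ v, v ∉ X → ρf v = v := by
    intro v hv
    have h1 : v ∉ S := fun hs => hv hs.1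
    have h2 : v ∉ T := fun ht => hv ht.1
    simp [hρf, h1, h2]
  have hloc : ∀ v, (v ∈ S ∧ ρf v ∈ π '' S) ∨ (v ∈ T ∧ ρf v ∈ U) ∨ (v ∉ X ∧ ρf v = v) := by
    intro v
    by_cases hs : v ∈ S
    · exact Or.inl ⟨hs, ⟨v, hs, (hρS v hs).symm⟩⟩
    by_cases ht : v ∈ T
    · refine Or.inr (Or.inl ⟨ht, ?_⟩)
      rw [hρT v ht]; exact (τ ⟨v, ht⟩).2
    · have hx : v ∉ X := by
        intro hx
        by_cases hpx : π v ∈ X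
        · exact hs ⟨hx, hpx⟩
        · exact ht ⟨hx, hpx⟩
      exact Or.inr (Or.inr ⟨hx, hρfix v hx⟩)
  have hinj : Function.Injective ρf := by
    intro v w hvw
    rcases hloc v with ⟨hv, mv⟩ | ⟨hv, mv⟩ | ⟨hv, ev⟩ <;>
      rcases hloc w with ⟨hw, mw⟩ | ⟨hw, mw⟩ | ⟨hw, ew⟩
    · have := hvw
      rw [hρS v hv, hρS w hw] at this
      exact π.injective this
    · exact absurd (hvw ▸ mv) mw.2
    · exact absurd (by rw [← ew, ← hvw]; exact hπSX mv) hw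
    · exact absurd (hvw ▸ mw) mv.2
    · have := hvw
      rw [hρT v hv, hρT w hw] at this
      have := τ.injective (Subtype.ext this)
      exact congrArg Subtype.val this
    · exact absurd (by rw [← ew, ← hvw]; exact hUX mv) hw
    · exact absurd (by rw [← ev, hvw]; exact hπSX mw) hv
    · exact absurd (by rw [← ev, hvw]; exact hUX mw) hv
    · rw [← ev, ← ew, hvw]
  set ρ : Equiv.Perm V := Equiv.ofBijective ρf (Finite.injective_iff_bijective.mp hinj) with hρ
  have hρcoe : ∀ v, ρ v = ρf v := fun v => rfl
  refine ⟨ρ, fun v hv => by rw [hρcoe, hρfix v hv], ?_⟩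
  intro a ha
  set b : V → Bool := fun y =>
    if hy : ∃ x, x ∈ T ∧ π x = y then a (ρf hy.choose) else a y with hb
  have hbX : ∀ y ∈ X, b y = a y := by
    intro y hy
    rw [hb]; dsimp only
    rw [dif_neg]
    rintro ⟨x, hx, rfl⟩
    exact hx.2 hy
  have hbπ : ∀ x ∈ X, b (π x) = a (ρf x) := by
    intro x hx
    by_cases hs : π x ∈ X
    · have hxS : x ∈ S := ⟨hx, hs⟩
      have hne : ¬ ∃ x', x' ∈ T ∧ π x' = π x := by
        rintro ⟨x', hx', he⟩
        exact hx'.2 (π.injective he ▸ hs)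
      rw [hb]; dsimp only
      rw [dif_neg hne, hρS x hxS]
    · have hxT : x ∈ T := ⟨hx, hs⟩
      have hex : ∃ x', x' ∈ T ∧ π x' = π x := ⟨x, hxT, rfl⟩
      rw [hb]; dsimp only
      rw [dif_pos hex]
      have hc := hex.choose_spec
      have : hex.choose = x := π.injective hc.2
      rw [this]
  have h1 : f (b ∘ π) = f (a ∘ ρf) := hf _ _ (fun x hx => hbπ x hx)
  have h2 : g b = g a := hg _ _ (fun x hx => hbX x hx)
  rw [← h2]
  apply hπ
  rw [h1]
  have : (a ∘ ρ) = (a ∘ ρf) := rfl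
  rw [← this]
  exact ha
end

section
/- Let X and Y be disjoint finite sets of variables with |X| ≥ |Y|, let V = X ∪ Y, and let f and g be Boolean functions over V such that f depends only on X and g depends only on Y. If there exists a permutation π of V with π(f) ⇒ g, then there exists a permutation π of V with π(f) ⇒ g such that π(y) ∉ Y for every y ∈ Y. -/
/-- For disjoint finite sets of variables `X`, `Y` with `|X| ≥ |Y|`,
`V = X ∪ Y`, `f` depending only on `X` and `g` depending only on `Y`: if some
permutation `π` of `V` satisfies `π(f) ⇒ g`, then some such permutation moreover
maps every element of `Y` outside of `Y`. -/
theorem stmt_3 {V : Type*} [Fintype V] [DecidableEq V] (X Y : Finset V)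
    (hdisj : Disjoint X Y) (hcard : Y.card ≤ X.card) (hunion : X ∪ Y = Finset.univ)
    (f g : (V → Bool) → Bool)
    (hf : ∀ a b : V → Bool, (∀ x ∈ X, a x = b x) → f a = f b)
    (hg : ∀ a b : V → Bool, (∀ y ∈ Y, a y = b y) → g a = g b)
    (h : ∃ π : Equiv.Perm V, ∀ a : V → Bool, f (a ∘ π) = true → g a = true) :
    ∃ π : Equiv.Perm V, (∀ a : V → Bool, f (a ∘ π) = true → g a = true) ∧
      ∀ y ∈ Y, π y ∉ Y := by
  classical
  obtain ⟨π, hπ⟩ := h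
  have hXY : ∀ v, v ∈ X → v ∈ Y → False := fun v hx hy =>
    Finset.disjoint_left.mp hdisj hx hy
  set P : Finset V := Y.image ⇑π.symm with hP
  have hPmem : ∀ v, v ∈ P ↔ π v ∈ Y := by
    intro v
    constructor
    · rw [hP, Finset.mem_image]
      rintro ⟨y, hy, rfl⟩; simpa using hy
    · intro hv; rw [hP, Finset.mem_image]; exact ⟨π v, hv, by simp⟩
  set C : Finset V := P ∩ X with hC
  set A : Finset V := P ∩ Y with hA
  have hCX : C ⊆ X := Finset.inter_subset_right
  have hAY : A ⊆ Y := Finset.inter_subset_right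
  have hPcard : P.card = Y.card := Finset.card_image_of_injective _ π.symm.injective
  have hCAdisj : Disjoint C A :=
    hdisj.mono hCX hAY
  have hCAunion : C ∪ A = P := by
    rw [hC, hA, ← Finset.inter_union_distrib_left, hunion, Finset.inter_univ]
  have hCA : C.card + A.card = Y.card := by
    rw [← hPcard, ← hCAunion, Finset.card_union_of_disjoint hCAdisj]
  have hA_le : A.card ≤ (X \ C).card := by
    rw [Finset.card_sdiff_of_subset hCX]
    have := Finset.card_le_card hCX
    omega
  obtain ⟨D, hDsub, hDcard⟩ := Finset.exists_subset_card_eq hA_le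
  have hDX : D ⊆ X := hDsub.trans (Finset.sdiff_subset)
  have hDC : ∀ v ∈ D, v ∉ C := fun v hv => (Finset.mem_sdiff.mp (hDsub hv)).2
  have hDA : ∀ v, v ∈ D → v ∈ A → False := fun v hd ha => hXY v (hDX hd) (hAY ha)
  have e : {x // x ∈ D} ≃ {x // x ∈ A} := Finset.equivOfCardEq hDcard
  set ρfun : V → V := fun v =>
    if h : v ∈ D then (e ⟨v, h⟩ : V)
    else if h : v ∈ A then (e.symm ⟨v, h⟩ : V) else v with hρfun
  have hρD : ∀ v (h : v ∈ D), ρfun v = (e ⟨v, h⟩ : V) := by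
    intro v hv; simp [hρfun, hv]
  have hρA : ∀ v (h : v ∈ A), ρfun v = (e.symm ⟨v, h⟩ : V) := by
    intro v hv
    have hvD : v ∉ D := fun hd => hDA v hd hv
    simp [hρfun, hv, hvD]
  have hρid : ∀ v, v ∉ D → v ∉ A → ρfun v = v := by
    intro v h1 h2; simp [hρfun, h1, h2]
  have hinv : Function.Involutive ρfun := by
    intro v
    by_cases hv : v ∈ D
    · rw [hρD v hv]
      have hm : (e ⟨v, hv⟩ : V) ∈ A := (e ⟨v, hv⟩).2
      rw [hρA _ hm]
      simp
    · by_cases hv' : v ∈ A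
      · rw [hρA v hv']
        have hm : (e.symm ⟨v, hv'⟩ : V) ∈ D := (e.symm ⟨v, hv'⟩).2
        rw [hρD _ hm]
        simp
      · rw [hρid v hv hv', hρid v hv hv']
  set ρ : Equiv.Perm V := hinv.toPerm with hρ
  have hρapp : ∀ v, ρ v = ρfun v := fun v => rfl
  refine ⟨ρ.trans π, ?_, ?_⟩
  · intro a ha
    set b : V → Bool := fun v => if π.symm v ∈ X then a (π (ρ (π.symm v))) else a v with hb
    have hfb : f (b ∘ π) = true := by
      rw [← ha]
      apply hf
      intro x hx
      simp only [Function.comp_apply, hb]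
      have : π.symm (π x) = x := π.symm_apply_apply x
      rw [this]
      simp [hx, Equiv.trans_apply]
    have hgb : g b = true := hπ b hfb
    rw [← hgb]
    apply hg
    intro y hy
    by_cases hx : π.symm y ∈ X
    · have hyC : π.symm y ∈ C := by
        rw [hC, Finset.mem_inter]
        refine ⟨(hPmem _).mpr ?_, hx⟩
        simpa using hy
      have h1 : π.symm y ∉ D := fun hd => hDC _ hd hyC
      have h2 : π.symm y ∉ A := fun ha' => hXY _ hx (hAY ha')
      simp only [hb, if_pos hx, hρapp, hρid _ h1 h2, π.apply_symm_apply]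
    · simp [hb, hx]
  · intro y hy
    simp only [Equiv.trans_apply]
    by_cases hyA : y ∈ A
    · have hm : (e.symm ⟨y, hyA⟩ : V) ∈ D := (e.symm ⟨y, hyA⟩).2
      rw [hρapp, hρA y hyA]
      intro hcontra
      exact hDC _ hm (by rw [hC, Finset.mem_inter]; exact ⟨(hPmem _).mpr hcontra, hDX hm⟩)
    · have hyD : y ∉ D := fun hd => hXY y (hDX hd) hy
      rw [hρapp, hρid y hyD hyA]
      intro hcontra
      exact hyA (by rw [hA, Finset.mem_inter]; exact ⟨(hPmem _).mpr hcontra, hy⟩)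
end

section
/- Let G and H be simple graphs on the same finite vertex set V, each without isolated vertices, and let t be a fresh variable not in V. Define Boolean functions over V ∪ {t} by F'_G(a) = a(t) ∧ ⋀_{{i,j} ∈ E(G)} (a(i) ∨ a(j)) and F'_H(a) = a(t) ∧ ⋀_{{i,j} ∈ E(H)} (a(i) ∨ a(j)). Then G contains a subgraph isomorphic to H if and only if F'_G isomorphically implies F'_H. -/
/-- For graphs `G`, `H` on finite `V` without isolated vertices and a fresh
variable `t` (modeled as `Sum.inr ()` in `V ⊕ Unit`), with
`F'_G(a) = a(t) ∧ ⋀_{{i,j} ∈ E(G)} (a(i) ∨ a(j))` and similarly `F'_H`: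
`G` contains a subgraph isomorphic to `H` iff `F'_G ⇒̃ F'_H`. -/
theorem stmt_5 {V : Type*} [Fintype V] (G H : SimpleGraph V)
    (hG : ∀ v : V, ∃ w : V, G.Adj v w)
    (hH : ∀ v : V, ∃ w : V, H.Adj v w)
    (FG FH : (V ⊕ Unit → Bool) → Bool)
    (hFG : ∀ a : V ⊕ Unit → Bool, FG a = true ↔
      (a (Sum.inr ()) = true ∧
        ∀ i j : V, G.Adj i j → (a (Sum.inl i) = true ∨ a (Sum.inl j) = true)))
    (hFH : ∀ a : V ⊕ Unit → Bool, FH a = true ↔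
      (a (Sum.inr ()) = true ∧
        ∀ i j : V, H.Adj i j → (a (Sum.inl i) = true ∨ a (Sum.inl j) = true))) :
    (∃ φ : V → V, Function.Injective φ ∧ ∀ u v : V, H.Adj u v → G.Adj (φ u) (φ v)) ↔
      (∃ π : Equiv.Perm (V ⊕ Unit), ∀ a : V ⊕ Unit → Bool, FG (a ∘ π) = true → FH a = true) := by
  classical
  constructor
  · rintro ⟨φ, hinj, hhom⟩
    have hbij : Function.Bijective φ := Finite.injective_iff_bijective.mp hinj
    let e : V ≃ V := Equiv.ofBijective φ hbij
    refine ⟨Equiv.sumCongr e.symm (Equiv.refl Unit), fun a ha => ?_⟩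
    rw [hFG] at ha
    rw [hFH]
    obtain ⟨hat, hedges⟩ := ha
    refine ⟨by simpa using hat, fun u v huv => ?_⟩
    have := hedges (φ u) (φ v) (hhom u v huv)
    have h1 : e.symm (φ u) = u := e.symm_apply_apply u
    have h2 : e.symm (φ v) = v := e.symm_apply_apply v
    simpa [Function.comp, h1, h2] using this
  · rintro ⟨π, hπ⟩
    have hπt : π (Sum.inr ()) = Sum.inr () := by
      rcases h : π (Sum.inr ()) with v0 | u
      · exfalso
        set a : V ⊕ Unit → Bool := fun x => decide (x ≠ Sum.inr ()) with ha
        have hga : FG (a ∘ π) = true := by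
          rw [hFG]
          constructor
          · simp [ha, Function.comp, h]
          · intro i j hij
            by_contra hc
            push_neg at hc
            obtain ⟨h1, h2⟩ := hc
            have e1 : π (Sum.inl i) = Sum.inr () := by
              by_contra hne; simp [ha, Function.comp, hne] at h1
            have e2 : π (Sum.inl j) = Sum.inr () := by
              by_contra hne; simp [ha, Function.comp, hne] at h2
            have := π.injective (e1.trans e2.symm)
            simp only [Sum.inl.injEq] at this
            exact hij.ne this
        have hfh := hπ a hga
        rw [hFH] at hfh
        simp [ha] at hfh
      · cases u; rfl
    have hex : ∀ v : V, ∃ w : V, π (Sum.inl v) = Sum.inl w := by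
      intro v
      rcases h : π (Sum.inl v) with w | u
      · exact ⟨w, rfl⟩
      · cases u
        exact absurd (π.injective (h.trans hπt.symm)) (by simp)
    choose σ hσ using hex
    have hσinj : Function.Injective σ := fun u v huv => by
      have : π (Sum.inl u) = π (Sum.inl v) := by rw [hσ, hσ, huv]
      simpa using π.injective this
    have hσbij := Finite.injective_iff_bijective.mp hσinj
    let e : V ≃ V := Equiv.ofBijective σ hσbij
    refine ⟨fun v => e.symm v, e.symm.injective, fun u v huv => ?_⟩
    by_contra hGuv
    set a : V ⊕ Unit → Bool := fun x => decide (x ≠ Sum.inl u ∧ x ≠ Sum.inl v) with ha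
    have hga : FG (a ∘ π) = true := by
      rw [hFG]
      refine ⟨by simp [ha, Function.comp, hπt], fun i j hij => ?_⟩
      by_contra hc
      push_neg at hc
      obtain ⟨h1, h2⟩ := hc
      simp only [Function.comp, hσ, ha, ne_eq, decide_eq_true_eq, not_and_or, not_not,
        Sum.inl.injEq] at h1 h2
      have hei : ∀ w : V, σ w = u → w = e.symm u := fun w hw => by
        rw [Equiv.eq_symm_apply]; exact hw
      have hev : ∀ w : V, σ w = v → w = e.symm v := fun w hw => by
        rw [Equiv.eq_symm_apply]; exact hw
      rcases h1 with h1 | h1 <;> rcases h2 with h2 | h2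
      · exact hij.ne (hσinj (h1.trans h2.symm))
      · exact hGuv (show G.Adj (e.symm u) (e.symm v) by rw [← hei i h1, ← hev j h2]; exact hij)
      · exact hGuv (show G.Adj (e.symm u) (e.symm v) by rw [← hei j h2, ← hev i h1]; exact hij.symm)
      · exact hij.ne (hσinj (h1.trans h2.symm))
    have hfh := hπ a hga
    rw [hFH] at hfh
    have := hfh.2 u v huv
    simp [ha] at this
end

section
/- Let G and H be simple graphs on the same finite vertex set V, each without isolated vertices, and let f and t be two distinct fresh variables not in V. Define Boolean functions over V ∪ {f,t} by F''_G(a) = ¬a(f) ∧ a(t) ∧ ⋀_{{i,j} ∈ E(G)} (a(i) ∨ a(j)) and F''_H(a) = ¬a(f) ∧ a(t) ∧ ⋀_{{i,j} ∈ E(H)} (a(i) ∨ a(j)). Then G contains a subgraph isomorphic to H if and only if F''_G isomorphically implies F''_H. -/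
/-- For graphs `G`, `H` on finite `V` without isolated vertices and distinct
fresh variables `f`, `t` (modeled as `Sum.inr false`, `Sum.inr true` in `V ⊕ Bool`), with
`F''_G(a) = ¬a(f) ∧ a(t) ∧ ⋀_{{i,j} ∈ E(G)} (a(i) ∨ a(j))` and similarly `F''_H`:
`G` contains a subgraph isomorphic to `H` iff `F''_G ⇒̃ F''_H`. -/
theorem stmt_6 {V : Type*} [Fintype V] (G H : SimpleGraph V)
    (hG : ∀ v : V, ∃ w : V, G.Adj v w)
    (hH : ∀ v : V, ∃ w : V, H.Adj v w)
    (FG FH : (V ⊕ Bool → Bool) → Bool)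
    (hFG : ∀ a : V ⊕ Bool → Bool, FG a = true ↔
      (a (Sum.inr false) = false ∧ a (Sum.inr true) = true ∧
        ∀ i j : V, G.Adj i j → (a (Sum.inl i) = true ∨ a (Sum.inl j) = true)))
    (hFH : ∀ a : V ⊕ Bool → Bool, FH a = true ↔
      (a (Sum.inr false) = false ∧ a (Sum.inr true) = true ∧
        ∀ i j : V, H.Adj i j → (a (Sum.inl i) = true ∨ a (Sum.inl j) = true))) :
    (∃ φ : V → V, Function.Injective φ ∧ ∀ u v : V, H.Adj u v → G.Adj (φ u) (φ v)) ↔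
      (∃ π : Equiv.Perm (V ⊕ Bool), ∀ a : V ⊕ Bool → Bool, FG (a ∘ π) = true → FH a = true) := by
  constructor
  · rintro ⟨φ, hinj, hmap⟩
    have hbij : Function.Bijective φ := Finite.injective_iff_bijective.mp hinj
    let e : V ≃ V := Equiv.ofBijective φ hbij
    refine ⟨Equiv.sumCongr e.symm (Equiv.refl Bool), ?_⟩
    intro a hFGa
    rw [hFG] at hFGa
    rw [hFH]
    obtain ⟨h0, h1, hcov⟩ := hFGa
    refine ⟨h0, h1, ?_⟩
    intro i j hij
    have := hcov (φ i) (φ j) (hmap i j hij)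
    have hei : e.symm (φ i) = i := e.symm_apply_apply i
    have hej : e.symm (φ j) = j := e.symm_apply_apply j
    simpa [hei, hej] using this
  · rintro ⟨π, himp⟩
    classical
    -- Step 1: π fixes inr true
    have h1 : π (Sum.inr true) = Sum.inr true := by
      by_contra hne
      set a : V ⊕ Bool → Bool :=
        fun x => decide (x ≠ Sum.inr true ∧ x ≠ π (Sum.inr false)) with ha
      have hFGa : FG (a ∘ π) = true := by
        rw [hFG]
        refine ⟨by simp [a], ?_, ?_⟩
        · have h01 : π (Sum.inr true) ≠ π (Sum.inr false) :=
            π.injective.ne (by simp)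
          simp [a, hne, h01]
        · intro i j hij
          by_cases hci : π (Sum.inl i) = Sum.inr true
          · right
            have hcj : π (Sum.inl j) ≠ Sum.inr true := by
              intro hc
              have : (Sum.inl i : V ⊕ Bool) = Sum.inl j :=
                π.injective (hci.trans hc.symm)
              exact G.ne_of_adj hij (Sum.inl.inj this)
            have h2 : π (Sum.inl j) ≠ π (Sum.inr false) :=
              π.injective.ne (by simp)
            simp [a, hcj, h2]
          · left
            have h2 : π (Sum.inl i) ≠ π (Sum.inr false) :=
              π.injective.ne (by simp)
            simp [a, hci, h2]
      have := (hFH a).mp (himp a hFGa)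
      have h := this.2.1
      simp [a] at h
    -- Step 2: π fixes inr false
    have h0 : π (Sum.inr false) = Sum.inr false := by
      by_contra hne
      set a : V ⊕ Bool → Bool := fun x => decide (x ≠ π (Sum.inr false)) with ha
      have hFGa : FG (a ∘ π) = true := by
        rw [hFG]
        refine ⟨by simp [a], ?_, ?_⟩
        · have h01 : π (Sum.inr true) ≠ π (Sum.inr false) :=
            π.injective.ne (by simp)
          simp [a, h01]
        · intro i j hij
          left
          have h2 : π (Sum.inl i) ≠ π (Sum.inr false) :=
            π.injective.ne (by simp)
          simp [a, h2]
      have := (hFH a).mp (himp a hFGa)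
      have h := this.1
      simp [a] at h
      exact hne h.symm
    -- Step 3: π maps inl into inl
    have hinl : ∀ v : V, ∃ w : V, π (Sum.inl v) = Sum.inl w := by
      intro v
      rcases hpv : π (Sum.inl v) with w | b
      · exact ⟨w, rfl⟩
      · exfalso
        cases b
        · exact absurd (π.injective (hpv.trans h0.symm)) (by simp)
        · exact absurd (π.injective (hpv.trans h1.symm)) (by simp)
    choose σ hσ using hinl
    have hσinj : Function.Injective σ := by
      intro i j hij
      have : π (Sum.inl i) = π (Sum.inl j) := by rw [hσ i, hσ j, hij]
      exact Sum.inl.inj (π.injective this)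
    have hσbij : Function.Bijective σ := Finite.injective_iff_bijective.mp hσinj
    let e : V ≃ V := Equiv.ofBijective σ hσbij
    refine ⟨e.symm, e.symm.injective, ?_⟩
    intro u v huv
    by_contra hnadj
    set a : V ⊕ Bool → Bool :=
      fun x => match x with
        | Sum.inl w => decide (w ≠ u ∧ w ≠ v)
        | Sum.inr b => b with ha
    have hFGa : FG (a ∘ π) = true := by
      rw [hFG]
      refine ⟨by simp [a, h0], by simp [a, h1], ?_⟩
      intro i j hij
      rw [Function.comp_apply, Function.comp_apply, hσ i, hσ j]
      by_contra hcon
      push_neg at hcon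
      obtain ⟨hi, hj⟩ := hcon
      simp only [a, decide_eq_true_eq, Bool.decide_and] at hi hj
      have hi' : σ i = u ∨ σ i = v := by
        by_contra hc; push_neg at hc; simp [hc.1, hc.2] at hi
      have hj' : σ j = u ∨ σ j = v := by
        by_contra hc; push_neg at hc; simp [hc.1, hc.2] at hj
      have hne : σ i ≠ σ j := fun hc => G.ne_of_adj hij (hσinj hc)
      have heu : ∀ x : V, σ x = u → x = e.symm u := by
        intro x hx; exact e.injective (by simpa [e] using (hx.trans (e.apply_symm_apply u).symm))
      have hev : ∀ x : V, σ x = v → x = e.symm v := by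
        intro x hx; exact e.injective (by simpa [e] using (hx.trans (e.apply_symm_apply v).symm))
      rcases hi' with hiu | hiv
      · rcases hj' with hju | hjv
        · exact hne (hiu.trans hju.symm)
        · exact hnadj (by rwa [← heu i hiu, ← hev j hjv])
      · rcases hj' with hju | hjv
        · exact hnadj (by rw [← heu j hju, ← hev i hiv]; exact hij.symm)
        · exact hne (hiv.trans hjv.symm)
    have := (hFH a).mp (himp a hFGa)
    have h := this.2.2 u v huv
    simp [a] at h
end

section
/- Let G and H be simple graphs on the same finite vertex set V, each without isolated vertices, and let f be a fresh variable not in V. Define Boolean functions over V ∪ {f} by N_G(a) = ¬a(f) ∧ ⋀_{{i,j} ∈ E(G)} (¬a(i) ∨ ¬a(j)) and N_H(a) = ¬a(f) ∧ ⋀_{{i,j} ∈ E(H)} (¬a(i) ∨ ¬a(j)). Then G contains a subgraph isomorphic to H if and only if N_G isomorphically implies N_H. -/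
/-- For graphs `G`, `H` on finite `V` without isolated vertices and a fresh
variable `f` (modeled as `Sum.inr ()` in `V ⊕ Unit`), with
`N_G(a) = ¬a(f) ∧ ⋀_{{i,j} ∈ E(G)} (¬a(i) ∨ ¬a(j))` and similarly `N_H`:
`G` contains a subgraph isomorphic to `H` iff `N_G ⇒̃ N_H`. -/
theorem stmt_7 {V : Type*} [Fintype V] (G H : SimpleGraph V)
    (hG : ∀ v : V, ∃ w : V, G.Adj v w)
    (hH : ∀ v : V, ∃ w : V, H.Adj v w)
    (NG NH : (V ⊕ Unit → Bool) → Bool)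
    (hNG : ∀ a : V ⊕ Unit → Bool, NG a = true ↔
      (a (Sum.inr ()) = false ∧
        ∀ i j : V, G.Adj i j → (a (Sum.inl i) = false ∨ a (Sum.inl j) = false)))
    (hNH : ∀ a : V ⊕ Unit → Bool, NH a = true ↔
      (a (Sum.inr ()) = false ∧
        ∀ i j : V, H.Adj i j → (a (Sum.inl i) = false ∨ a (Sum.inl j) = false))) :
    (∃ φ : V → V, Function.Injective φ ∧ ∀ u v : V, H.Adj u v → G.Adj (φ u) (φ v)) ↔
      (∃ π : Equiv.Perm (V ⊕ Unit), ∀ a : V ⊕ Unit → Bool, NG (a ∘ π) = true → NH a = true) := by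
  classical
  constructor
  · rintro ⟨φ, hinj, hmap⟩
    have hbij : Function.Bijective φ := Finite.injective_iff_bijective.mp hinj
    let σ : Equiv.Perm V := Equiv.ofBijective φ hbij
    refine ⟨Equiv.sumCongr σ.symm (Equiv.refl Unit), ?_⟩
    intro a ha
    rw [hNG] at ha
    rw [hNH]
    obtain ⟨h0, he⟩ := ha
    refine ⟨by simpa using h0, ?_⟩
    intro u v huv
    have h := he (φ u) (φ v) (hmap u v huv)
    have hu : σ.symm (φ u) = u := σ.symm_apply_apply u
    have hv : σ.symm (φ v) = v := σ.symm_apply_apply v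
    simpa [Equiv.sumCongr_apply, hu, hv] using h
  · rintro ⟨π, hπ⟩
    -- Step 1: π fixes inr ()
    have hfix : π (Sum.inr ()) = Sum.inr () := by
      by_contra hne
      set a : V ⊕ Unit → Bool := fun x => if x = Sum.inr () then true else false with ha
      have hng : NG (a ∘ π) = true := by
        rw [hNG]
        constructor
        · simp only [Function.comp_apply, ha]
          simp [hne]
        · intro i j hij
          by_contra hc
          push_neg at hc
          obtain ⟨h1, h2⟩ := hc
          simp only [Function.comp_apply, ha] at h1 h2
          have e1 : π (Sum.inl i) = Sum.inr () := by
            by_contra h; simp [h] at h1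
          have e2 : π (Sum.inl j) = Sum.inr () := by
            by_contra h; simp [h] at h2
          have : (Sum.inl i : V ⊕ Unit) = Sum.inl j := π.injective (e1.trans e2.symm)
          exact hij.ne (Sum.inl.inj this)
      have hnh := hπ a hng
      rw [hNH] at hnh
      simp [ha] at hnh
    -- Step 2: π maps inl into inl
    have hinl : ∀ i : V, ∃ j : V, π (Sum.inl i) = Sum.inl j := by
      intro i
      cases h : π (Sum.inl i) with
      | inl j => exact ⟨j, rfl⟩
      | inr u =>
        exfalso
        have : π (Sum.inl i) = π (Sum.inr ()) := by rw [h, hfix]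
        exact absurd (π.injective this) (by simp)
    let g : V → V := fun i => Classical.choose (hinl i)
    have hg : ∀ i, π (Sum.inl i) = Sum.inl (g i) := fun i => Classical.choose_spec (hinl i)
    have hginj : Function.Injective g := by
      intro i j hij
      have : π (Sum.inl i) = π (Sum.inl j) := by rw [hg, hg, hij]
      exact Sum.inl.inj (π.injective this)
    have hgbij : Function.Bijective g := Finite.injective_iff_bijective.mp hginj
    let e : Equiv.Perm V := Equiv.ofBijective g hgbij
    refine ⟨fun u => e.symm u, e.symm.injective, ?_⟩
    intro u v huv
    by_contra hnadj
    set u' := e.symm u with hu'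
    set v' := e.symm v with hv'
    have hgu : g u' = u := e.apply_symm_apply u
    have hgv : g v' = v := e.apply_symm_apply v
    set a : V ⊕ Unit → Bool :=
      fun x => if x = Sum.inl u ∨ x = Sum.inl v then true else false with ha
    have hng : NG (a ∘ π) = true := by
      rw [hNG]
      constructor
      · simp only [Function.comp_apply, hfix, ha]
        simp
      · intro i j hij
        by_contra hc
        push_neg at hc
        obtain ⟨h1, h2⟩ := hc
        simp only [Function.comp_apply, ha, hg] at h1 h2
        have m1 : g i = u ∨ g i = v := by
          by_contra h; push_neg at h; simp [h.1, h.2] at h1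
        have m2 : g j = u ∨ g j = v := by
          by_contra h; push_neg at h; simp [h.1, h.2] at h2
        have hij' : i ≠ j := hij.ne
        rcases m1 with m1 | m1 <;> rcases m2 with m2 | m2
        · exact hij' (hginj (m1.trans m2.symm))
        · have : i = u' := hginj (by rw [m1, hgu])
          have hj : j = v' := hginj (by rw [m2, hgv])
          rw [this, hj] at hij
          exact hnadj hij
        · have : i = v' := hginj (by rw [m1, hgv])
          have hj : j = u' := hginj (by rw [m2, hgu])
          rw [this, hj] at hij
          exact hnadj hij.symm
        · exact hij' (hginj (m1.trans m2.symm))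
    have hnh := hπ a hng
    rw [hNH] at hnh
    have := hnh.2 u v huv
    simp [ha] at this
end

section
/- Let G and H be simple graphs on the same finite vertex set V, each without isolated vertices, and let f and t be two distinct fresh variables not in V. Define Boolean functions over V ∪ {f,t} by M_G(a) = ¬a(f) ∧ a(t) ∧ ⋀_{{i,j} ∈ E(G)} (¬a(i) ∨ ¬a(j)) and M_H(a) = ¬a(f) ∧ a(t) ∧ ⋀_{{i,j} ∈ E(H)} (¬a(i) ∨ ¬a(j)). Then G contains a subgraph isomorphic to H if and only if M_G isomorphically implies M_H. -/
/-- For graphs `G`, `H` on finite `V` without isolated vertices and distinct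
fresh variables `f`, `t` (modeled as `Sum.inr false`, `Sum.inr true` in `V ⊕ Bool`), with
`M_G(a) = ¬a(f) ∧ a(t) ∧ ⋀_{{i,j} ∈ E(G)} (¬a(i) ∨ ¬a(j))` and similarly `M_H`:
`G` contains a subgraph isomorphic to `H` iff `M_G ⇒̃ M_H`. -/

theorem stmt_8 {V : Type*} [Fintype V] (G H : SimpleGraph V)
    (hG : ∀ v : V, ∃ w : V, G.Adj v w)
    (hH : ∀ v : V, ∃ w : V, H.Adj v w)
    (MG MH : (V ⊕ Bool → Bool) → Bool)
    (hMG : ∀ a : V ⊕ Bool → Bool, MG a = true ↔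
      (a (Sum.inr false) = false ∧ a (Sum.inr true) = true ∧
        ∀ i j : V, G.Adj i j → (a (Sum.inl i) = false ∨ a (Sum.inl j) = false)))
    (hMH : ∀ a : V ⊕ Bool → Bool, MH a = true ↔
      (a (Sum.inr false) = false ∧ a (Sum.inr true) = true ∧
        ∀ i j : V, H.Adj i j → (a (Sum.inl i) = false ∨ a (Sum.inl j) = false))) :
    (∃ φ : V → V, Function.Injective φ ∧ ∀ u v : V, H.Adj u v → G.Adj (φ u) (φ v)) ↔
      (∃ π : Equiv.Perm (V ⊕ Bool), ∀ a : V ⊕ Bool → Bool, MG (a ∘ π) = true → MH a = true) := by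
  classical
  constructor
  · rintro ⟨φ, hinj, hφ⟩
    have hbij : Function.Bijective φ := Finite.injective_iff_bijective.mp hinj
    let e : V ≃ V := Equiv.ofBijective φ hbij
    have key : ∀ u : V, e.symm (φ u) = u := fun u => e.symm_apply_apply u
    refine ⟨Equiv.sumCongr e.symm (Equiv.refl Bool), fun a ha => ?_⟩
    rw [hMG] at ha
    rw [hMH]
    obtain ⟨h1, h2, h3⟩ := ha
    refine ⟨by simpa using h1, by simpa using h2, fun u v huv => ?_⟩
    have := h3 (φ u) (φ v) (hφ u v huv)
    simpa [key] using this
  · rintro ⟨π, hπ⟩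
    -- Step 1: π fixes inr true
    have hfix_t : π (Sum.inr true) = Sum.inr true := by
      set a : V ⊕ Bool → Bool := fun x => decide (x = π (Sum.inr true)) with ha
      have hmg : MG (a ∘ π) = true := by
        rw [hMG]
        refine ⟨?_, ?_, ?_⟩
        · simp only [Function.comp, ha, decide_eq_false_iff_not]
          intro h
          exact (by simp : (Sum.inr false : V ⊕ Bool) ≠ Sum.inr true) (π.injective h)
        · simp [ha]
        · intro i j hij
          by_contra hcon
          push_neg at hcon
          obtain ⟨hi, hj⟩ := hcon
          simp only [Function.comp, ha, Bool.not_eq_false, decide_eq_true_eq] at hi hj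
          exact hij.ne (Sum.inl_injective (π.injective (hi.trans hj.symm)))
      have := (hMH a).mp (hπ a hmg)
      have h2 := this.2.1
      simp only [ha, decide_eq_true_eq] at h2
      exact h2.symm
    -- Step 2: π fixes inr false
    have hfix_f : π (Sum.inr false) = Sum.inr false := by
      by_contra hne
      obtain ⟨w, hw⟩ : ∃ w, π (Sum.inr false) = Sum.inl w := by
        rcases h : π (Sum.inr false) with w | b
        · exact ⟨w, rfl⟩
        · cases b
          · exact absurd h hne
          · exact absurd (π.injective (h.trans hfix_t.symm)) (by simp)
      set a : V ⊕ Bool → Bool := fun x => decide (x = Sum.inr true ∨ x = Sum.inr false) with ha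
      have hmg : MG (a ∘ π) = true := by
        rw [hMG]
        refine ⟨?_, ?_, ?_⟩
        · simp [ha, hw, Function.comp]
        · simp [ha, hfix_t, Function.comp]
        · intro i j hij
          by_contra hcon
          push_neg at hcon
          obtain ⟨hi, hj⟩ := hcon
          simp only [Function.comp, ha, Bool.not_eq_false, decide_eq_true_eq] at hi hj
          have hi' : π (Sum.inl i) = Sum.inr false := by
            rcases hi with hi | hi
            · exact absurd (π.injective (hi.trans hfix_t.symm)) (by simp)
            · exact hi
          have hj' : π (Sum.inl j) = Sum.inr false := by
            rcases hj with hj | hj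
            · exact absurd (π.injective (hj.trans hfix_t.symm)) (by simp)
            · exact hj
          exact hij.ne (Sum.inl_injective (π.injective (hi'.trans hj'.symm)))
      have := (hMH a).mp (hπ a hmg)
      have h1 := this.1
      simp [ha] at h1
    -- Step 3: π restricts to a permutation of V
    have hinl : ∀ i : V, ∃ j : V, π (Sum.inl i) = Sum.inl j := by
      intro i
      rcases h : π (Sum.inl i) with j | b
      · exact ⟨j, rfl⟩
      · cases b
        · exact absurd (π.injective (h.trans hfix_f.symm)) (by simp)
        · exact absurd (π.injective (h.trans hfix_t.symm)) (by simp)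
    choose σ hσ using hinl
    have hσinj : Function.Injective σ := fun i j hij =>
      Sum.inl_injective (π.injective ((hσ i).trans (by rw [hij, ← hσ j])))
    have hσsurj : Function.Surjective σ := (Finite.injective_iff_surjective.mp hσinj)
    choose φ hφ using hσsurj
    have hφinj : Function.Injective φ := fun u v huv => by
      rw [← hφ u, ← hφ v, huv]
    refine ⟨φ, hφinj, fun u v huv => ?_⟩
    have huvne : u ≠ v := huv.ne
    set a : V ⊕ Bool → Bool := fun x => decide (x = Sum.inr true ∨ x = Sum.inl u ∨ x = Sum.inl v) with ha
    have hmh : MH a ≠ true := by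
      intro h
      rcases ((hMH a).mp h).2.2 u v huv with h' | h' <;> simp [ha] at h'
    have hmg : MG (a ∘ π) ≠ true := fun h => hmh (hπ a h)
    simp only [ne_eq, hMG] at hmg
    push_neg at hmg
    have hc1 : (a ∘ π) (Sum.inr false) = false := by
      simp [ha, hfix_f, Function.comp]
    have hc2 : (a ∘ π) (Sum.inr true) = true := by
      simp [ha, hfix_t, Function.comp]
    obtain ⟨i, j, hij, hi, hj⟩ := hmg hc1 hc2
    simp only [Function.comp, ha, hσ, Bool.not_eq_false, decide_eq_true_eq] at hi hj
    have hi' : σ i = u ∨ σ i = v := by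
      rcases hi with h | h | h
      · exact absurd h (by simp)
      · exact Or.inl (Sum.inl_injective h)
      · exact Or.inr (Sum.inl_injective h)
    have hj' : σ j = u ∨ σ j = v := by
      rcases hj with h | h | h
      · exact absurd h (by simp)
      · exact Or.inl (Sum.inl_injective h)
      · exact Or.inr (Sum.inl_injective h)
    have hijne : i ≠ j := hij.ne
    rcases hi' with hiu | hiv <;> rcases hj' with hju | hjv
    · exact absurd (hσinj (hiu.trans hju.symm)) hijne
    · have : φ u = i := hσinj (by rw [hφ u, hiu])
      have hj2 : φ v = j := hσinj (by rw [hφ v, hjv])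
      rw [this, hj2]; exact hij
    · have : φ v = i := hσinj (by rw [hφ v, hiv])
      have hj2 : φ u = j := hσinj (by rw [hφ u, hju])
      rw [this, hj2]; exact hij.symm
    · exact absurd (hσinj (hiv.trans hjv.symm)) hijne
end

section
/- Let G be a simple graph on a finite vertex set V and let x, y ∈ V with x ≠ y. If F_G implies the Boolean function a ↦ (a(x) ∨ a(y)), then {x,y} is an edge of G. -/
/-- For a graph `G` on finite `V` and distinct `x`, `y`, if
`F_G ⇒ (a ↦ a(x) ∨ a(y))` then `{x,y}` is an edge of `G`. -/
theorem stmt_9 {V : Type*} [Fintype V] (G : SimpleGraph V) (x y : V) (hxy : x ≠ y)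
    (FG : (V → Bool) → Bool)
    (hFG : ∀ a : V → Bool, FG a = true ↔ ∀ i j : V, G.Adj i j → (a i = true ∨ a j = true))
    (h : ∀ a : V → Bool, FG a = true → (a x || a y) = true) :
    G.Adj x y := by
  classical
  set a : V → Bool := fun v => decide (v ≠ x ∧ v ≠ y) with ha
  have hax : a x = false := by simp [ha]
  have hay : a y = false := by simp [ha]
  have hFGa : FG a ≠ true := fun hf => by simpa [hax, hay] using h a hf
  rw [Ne, hFG] at hFGa
  push_neg at hFGa
  obtain ⟨i, j, hij, hi, hj⟩ := hFGa
  have hi' : i = x ∨ i = y := by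
    by_contra hc; push_neg at hc; simp [ha, hc.1, hc.2] at hi
  have hj' : j = x ∨ j = y := by
    by_contra hc; push_neg at hc; simp [ha, hc.1, hc.2] at hj
  have hne := hij.ne
  rcases hi' with rfl | rfl <;> rcases hj' with rfl | rfl <;>
    first | exact hij | exact hij.symm | exact absurd rfl hne
end

section
/- Let m ≥ 1 and B ≥ 1 be integers, let A be a finite set, and let s : A → ℕ satisfy s(a) ≥ 1 for all a ∈ A and Σ_{a∈A} s(a) = mB. Let X be a finite set of variables equipped with maps p : X → {1,…,m} and q : X → A such that every fiber p⁻¹(i) has exactly B elements and every fiber q⁻¹(a) has exactly s(a) elements. Define Boolean functions over X by S(α) = true iff α is constant on every fiber of p, and U(α) = true iff α is constant on every fiber of q. Then S isomorphically implies U if and only if there is a map c : A → {1,…,m} such that Σ_{a : c(a)=i} s(a) = B for every i ∈ {1,…,m}. -/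
/-!
`S (α ∘ π) ⇒ U α` for every `α` says exactly that the fibers of `q` refine those of
`p ∘ π⁻¹`, i.e. that `p ∘ π⁻¹ = c ∘ q` for some `c : A → Fin m`. Two maps `X → Fin m` differ
by a permutation of `X` iff their fibers have the same sizes, and the fiber of `c ∘ q` over `i`
has size `∑_{c a = i} s a`.
-/

open Finset Function

section

variable {W X Y Z : Type*}

lemma Function.factorsThrough_iff_forall_bool {f : X → Y} {g : X → Z} :
    FactorsThrough f g ↔ ∀ α : X → Bool, FactorsThrough α f → FactorsThrough α g := by
  classical
  refine ⟨fun hfg α hαf a b hab => hαf (hfg hab), fun h a b hab => ?_⟩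
  -- Test with the indicator of the `f`-fiber of `b`.
  simpa using h (fun x => decide (f x = f b)) (fun x y hxy => by simp [hxy]) hab

lemma Function.factorsThrough_comp_equiv_iff {α : X → Z} {f : W → Y} (π : W ≃ X) :
    FactorsThrough (α ∘ π) f ↔ FactorsThrough α (f ∘ π.symm) := by
  refine ⟨fun h => ?_, fun h => ?_⟩
  · simpa [comp_assoc] using h.comp_right π.symm
  · simpa [comp_assoc] using h.comp_right π

lemma exists_perm_comp_eq_iff_card_fiber_eq [Fintype X] [DecidableEq Y] {f g : X → Y} :
    (∃ σ : Equiv.Perm X, f ∘ σ = g) ↔ ∀ y, #{x | g x = y} = #{x | f x = y} := by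
  constructor
  · rintro ⟨σ, rfl⟩ y
    exact card_equiv σ (by simp)
  · intro h
    have e : ∀ y, {x // g x = y} ≃ {x // f x = y} := fun y =>
      Fintype.equivOfCardEq (by simp only [Fintype.card_subtype, h])
    exact ⟨Equiv.ofFiberEquiv e, funext (Equiv.ofFiberEquiv_map e)⟩

lemma card_fiber_comp_eq_sum [Fintype X] [Fintype Y] [DecidableEq Y] [DecidableEq Z]
    (q : X → Y) (c : Y → Z) (z : Z) :
    #{x | c (q x) = z} = ∑ y with c y = z, #{x | q x = y} := by
  rw [sum_card_fiberwise_eq_card_filter]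
  simp

end

theorem stmt_10_general (m B : ℕ) (hm : 1 ≤ m)
    {A : Type*} [Fintype A] [DecidableEq A] (s : A → ℕ)
    {X : Type*} [Fintype X] (p : X → Fin m) (q : X → A)
    (hp : ∀ i : Fin m, (Finset.univ.filter fun x => p x = i).card = B)
    (hq : ∀ a : A, (Finset.univ.filter fun x => q x = a).card = s a)
    (S U : (X → Bool) → Bool)
    (hS : ∀ α : X → Bool, S α = true ↔ ∀ x x' : X, p x = p x' → α x = α x')
    (hU : ∀ α : X → Bool, U α = true ↔ ∀ x x' : X, q x = q x' → α x = α x') :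
    (∃ π : Equiv.Perm X, ∀ α : X → Bool, S (α ∘ π) = true → U α = true) ↔
      (∃ c : A → Fin m, ∀ i : Fin m, ∑ a ∈ Finset.univ.filter fun a => c a = i, s a = B) := by
  have : Nonempty (Fin m) := ⟨⟨0, hm⟩⟩
  have hS' : ∀ α, S α = true ↔ FactorsThrough α p := hS
  have hU' : ∀ α, U α = true ↔ FactorsThrough α q := hU
  calc (∃ π : Equiv.Perm X, ∀ α : X → Bool, S (α ∘ π) = true → U α = true)
      ↔ ∃ π : Equiv.Perm X, FactorsThrough (p ∘ π.symm) q := by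
        refine exists_congr fun π => ?_
        rw [factorsThrough_iff_forall_bool]
        simp only [hS', hU', factorsThrough_comp_equiv_iff]
    _ ↔ ∃ c : A → Fin m, ∃ σ : Equiv.Perm X, p ∘ σ = c ∘ q := by
        simp only [factorsThrough_iff]
        rw [exists_comm]
        exact exists_congr fun c => (Equiv.symm_bijective.surjective.exists
          (p := fun σ : Equiv.Perm X => p ∘ σ = c ∘ q)).symm
    _ ↔ _ := by
        simp only [exists_perm_comp_eq_iff_card_fiber_eq, comp_apply, card_fiber_comp_eq_sum, hq,
          hp]

/-- With `X` partitioned by `p : X → Fin m` into fibers of size `B` and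
by `q : X → A` into fibers of size `s a`, `S` = "constant on fibers of `p`" and
`U` = "constant on fibers of `q`": `S ⇒̃ U` iff `A` can be partitioned via
`c : A → Fin m` so that each part has total size `B`. -/
theorem stmt_10 (m B : ℕ) (hm : 1 ≤ m) (hB : 1 ≤ B)
    {A : Type*} [Fintype A] [DecidableEq A] (s : A → ℕ)
    (hs : ∀ a : A, 1 ≤ s a) (hsum : ∑ a : A, s a = m * B)
    {X : Type*} [Fintype X] [DecidableEq X] (p : X → Fin m) (q : X → A)
    (hp : ∀ i : Fin m, (Finset.univ.filter fun x => p x = i).card = B)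
    (hq : ∀ a : A, (Finset.univ.filter fun x => q x = a).card = s a)
    (S U : (X → Bool) → Bool)
    (hS : ∀ α : X → Bool, S α = true ↔ ∀ x x' : X, p x = p x' → α x = α x')
    (hU : ∀ α : X → Bool, U α = true ↔ ∀ x x' : X, q x = q x' → α x = α x') :
    (∃ π : Equiv.Perm X, ∀ α : X → Bool, S (α ∘ π) = true → U α = true) ↔
      (∃ c : A → Fin m, ∀ i : Fin m, ∑ a ∈ Finset.univ.filter fun a => c a = i, s a = B) :=
  stmt_10_general m B hm s p q hp hq S U hS hU
end

section
/- Let m ≥ 1 and B ≥ 1 be integers, let A be a finite set, and let s : A → ℕ satisfy s(a) ≥ 1 for all a ∈ A and Σ_{a∈A} s(a) = mB. Let X be a finite set of variables equipped with maps p : X → {1,…,m} and q : X → A such that every fiber p⁻¹(i) has exactly B elements and every fiber q⁻¹(a) has exactly s(a) elements, and let t be a fresh variable not in X. Define Boolean functions over X ∪ {t} by S'(α) = α(t) ∧ (α is constant on every fiber of p) and U'(α) = α(t) ∧ (α is constant on every fiber of q). Then S' isomorphically implies U' if and only if there is a map c : A → {1,…,m} such that Σ_{a : c(a)=i} s(a)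 = B for every i ∈ {1,…,m}. -/
/-!
A permutation `π` witnessing `S' ⇒̃ U'` must fix the fresh variable `t`: otherwise the
assignment that is true only at `π t` satisfies `S' ∘ π` but is false at `t`. So `π` restricts
to a permutation `e` of `X`, and testing it on the indicator functions of the sets `e (p⁻¹ i)`
shows that `S' ∘ π ⇒ U'` holds exactly when every fiber of `q` lies in one of these sets, i.e.
when `p ∘ e⁻¹ = c ∘ q` for some `c : A → Fin m`. Finally, `p ∘ e⁻¹ = c ∘ q` for some
permutation `e` iff the fibers of `p` and of `c ∘ q` have the same sizes, and the fiber of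
`c ∘ q` over `i` has size `∑_{c a = i} s a`.
-/

open Function

theorem exists_equiv_comp_eq_iff {α β γ : Type*} [Fintype α] [Fintype β] [DecidableEq γ]
    (f : α → γ) (g : β → γ) :
    (∃ e : α ≃ β, g ∘ e = f) ↔ ∀ c, Fintype.card {a // f a = c} = Fintype.card {b // g b = c} := by
  constructor
  · rintro ⟨e, rfl⟩ c
    exact Fintype.card_congr (e.subtypeEquiv fun _ => Iff.rfl)
  · intro h
    exact ⟨Equiv.ofFiberEquiv fun c => Fintype.equivOfCardEq (h c),
      funext (Equiv.ofFiberEquiv_map _)⟩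

theorem forall_bool_factorsThrough_iff {X Y ι κ : Type*} (e : Y ≃ X) (p : Y → ι) (q : X → κ) :
    (∀ β : X → Bool, (β ∘ e).FactorsThrough p → β.FactorsThrough q) ↔
      (p ∘ e.symm).FactorsThrough q := by
  classical
  constructor
  · intro h x x' hq
    let β : X → Bool := fun w => decide (p (e.symm w) = p (e.symm x'))
    have hβ : (β ∘ e).FactorsThrough p := fun y y' hp => by simp [β, hp]
    simpa [β] using h β hβ hq
  · intro h β hβ x x' hq
    simpa using hβ (h hq)

section FreshVariable

variable {X ι : Type*}

/-- With `p` (resp. `q`) this is the function `S'` (resp. `U'`); `Sum.inr ()` is the variable `t`. -/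
def MarkedFactorsThrough (α : X ⊕ Unit → Bool) (p : X → ι) : Prop :=
  α (Sum.inr ()) = true ∧ (α ∘ Sum.inl).FactorsThrough p

theorem forall_markedFactorsThrough_sumCongr_iff {κ : Type*} (e : Equiv.Perm X) (p : X → ι)
    (q : X → κ) :
    (∀ α : X ⊕ Unit → Bool, MarkedFactorsThrough (α ∘ Equiv.sumCongr e (Equiv.refl Unit)) p →
        MarkedFactorsThrough α q) ↔
      ∀ β : X → Bool, (β ∘ e).FactorsThrough p → β.FactorsThrough q := by
  constructor
  · intro h β hβ
    exact (h (Sum.elim β fun _ => true) ⟨rfl, hβ⟩).2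
  · intro h α hα
    exact ⟨hα.1, h (α ∘ Sum.inl) hα.2⟩

theorem apply_inr_eq_of_markedFactorsThrough {κ : Type*} {p : X → ι} {q : X → κ}
    {π : Equiv.Perm (X ⊕ Unit)}
    (hπ : ∀ α : X ⊕ Unit → Bool, MarkedFactorsThrough (α ∘ π) p → MarkedFactorsThrough α q) :
    π (Sum.inr ()) = Sum.inr () := by
  classical
  let α : X ⊕ Unit → Bool := fun z => decide (z = π (Sum.inr ()))
  have hα : MarkedFactorsThrough (α ∘ π) p := ⟨by simp [α], fun x x' _ => by simp [α]⟩
  simpa [α, eq_comm] using (hπ α hα).1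

theorem exists_eq_sumCongr_of_apply_inr [Finite X] {π : Equiv.Perm (X ⊕ Unit)}
    (hπ : π (Sum.inr ()) = Sum.inr ()) :
    ∃ e : Equiv.Perm X, π = Equiv.sumCongr e (Equiv.refl Unit) := by
  have hinl : ∀ x, ∃ y, π (Sum.inl x) = Sum.inl y := by
    intro x
    rcases hx : π (Sum.inl x) with y | ⟨⟩
    · exact ⟨y, rfl⟩
    · exact absurd (π.injective (hx.trans hπ.symm)) Sum.inl_ne_inr
  choose σ hσ using hinl
  have hσinj : Injective σ := fun x x' h =>
    Sum.inl_injective (π.injective (by rw [hσ, hσ, h]))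
  refine ⟨Equiv.ofBijective σ (Finite.injective_iff_bijective.mp hσinj), Equiv.ext ?_⟩
  rintro (x | ⟨⟩)
  · exact hσ x
  · exact hπ

theorem exists_perm_markedFactorsThrough_iff [Finite X] {κ : Type*} (p : X → ι) (q : X → κ) :
    (∃ π : Equiv.Perm (X ⊕ Unit),
        ∀ α : X ⊕ Unit → Bool, MarkedFactorsThrough (α ∘ π) p → MarkedFactorsThrough α q) ↔
      ∃ e : Equiv.Perm X, (p ∘ e).FactorsThrough q := by
  constructor
  · rintro ⟨π, hπ⟩
    obtain ⟨e, rfl⟩ := exists_eq_sumCongr_of_apply_inr (apply_inr_eq_of_markedFactorsThrough hπ)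
    rw [forall_markedFactorsThrough_sumCongr_iff, forall_bool_factorsThrough_iff] at hπ
    exact ⟨e.symm, hπ⟩
  · rintro ⟨e, he⟩
    refine ⟨Equiv.sumCongr e.symm (Equiv.refl Unit), ?_⟩
    rwa [forall_markedFactorsThrough_sumCongr_iff, forall_bool_factorsThrough_iff]

end FreshVariable

theorem stmt_11_general (m B : ℕ) (hm : 1 ≤ m)
    {A : Type*} [Fintype A] [DecidableEq A] (s : A → ℕ)
    {X : Type*} [Fintype X] (p : X → Fin m) (q : X → A)
    (hp : ∀ i : Fin m, (Finset.univ.filter fun x => p x = i).card = B)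
    (hq : ∀ a : A, (Finset.univ.filter fun x => q x = a).card = s a)
    (S' U' : (X ⊕ Unit → Bool) → Bool)
    (hS' : ∀ α : X ⊕ Unit → Bool, S' α = true ↔
      (α (Sum.inr ()) = true ∧ ∀ x x' : X, p x = p x' → α (Sum.inl x) = α (Sum.inl x')))
    (hU' : ∀ α : X ⊕ Unit → Bool, U' α = true ↔
      (α (Sum.inr ()) = true ∧ ∀ x x' : X, q x = q x' → α (Sum.inl x) = α (Sum.inl x'))) :
    (∃ π : Equiv.Perm (X ⊕ Unit), ∀ α : X ⊕ Unit → Bool, S' (α ∘ π) = true → U' α = true) ↔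
      (∃ c : A → Fin m, ∀ i : Fin m, ∑ a ∈ Finset.univ.filter fun a => c a = i, s a = B) := by
  have : Nonempty (Fin m) := ⟨⟨0, hm⟩⟩
  have hcard (c : A → Fin m) (i : Fin m) :
      Fintype.card {x // (c ∘ q) x = i} = ∑ a ∈ Finset.univ.filter fun a => c a = i, s a := by
    simp_rw [← hq, Finset.sum_card_fiberwise_eq_card_filter, Fintype.card_subtype, comp_apply,
      Finset.mem_filter, Finset.mem_univ, true_and]
  calc _ ↔ ∃ π : Equiv.Perm (X ⊕ Unit), ∀ α : X ⊕ Unit → Bool,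
          MarkedFactorsThrough (α ∘ π) p → MarkedFactorsThrough α q :=
        exists_congr fun π => forall_congr' fun α => imp_congr (hS' _) (hU' _)
    _ ↔ ∃ e : Equiv.Perm X, ∃ c : A → Fin m, p ∘ e = c ∘ q := by
        simp only [exists_perm_markedFactorsThrough_iff, factorsThrough_iff]
    _ ↔ ∃ c : A → Fin m, ∃ e : X ≃ X, p ∘ e = c ∘ q := exists_comm
    _ ↔ _ := exists_congr fun c => (exists_equiv_comp_eq_iff (c ∘ q) p).trans <|
        forall_congr' fun i => by rw [hcard, Fintype.card_subtype, hp]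

/-- Like STATEMENT 10 but with a fresh variable `t` (modeled as
`Sum.inr ()` in `X ⊕ Unit`), `S'(α) = α(t) ∧ (α constant on fibers of p)` and
`U'(α) = α(t) ∧ (α constant on fibers of q)`: `S' ⇒̃ U'` iff `A` can be
partitioned via `c : A → Fin m` so that each part has total size `B`. -/
theorem stmt_11 (m B : ℕ) (hm : 1 ≤ m) (hB : 1 ≤ B)
    {A : Type*} [Fintype A] [DecidableEq A] (s : A → ℕ)
    (hs : ∀ a : A, 1 ≤ s a) (hsum : ∑ a : A, s a = m * B)
    {X : Type*} [Fintype X] [DecidableEq X] (p : X → Fin m) (q : X → A)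
    (hp : ∀ i : Fin m, (Finset.univ.filter fun x => p x = i).card = B)
    (hq : ∀ a : A, (Finset.univ.filter fun x => q x = a).card = s a)
    (S' U' : (X ⊕ Unit → Bool) → Bool)
    (hS' : ∀ α : X ⊕ Unit → Bool, S' α = true ↔
      (α (Sum.inr ()) = true ∧ ∀ x x' : X, p x = p x' → α (Sum.inl x) = α (Sum.inl x')))
    (hU' : ∀ α : X ⊕ Unit → Bool, U' α = true ↔
      (α (Sum.inr ()) = true ∧ ∀ x x' : X, q x = q x' → α (Sum.inl x) = α (Sum.inl x'))) :
    (∃ π : Equiv.Perm (X ⊕ Unit), ∀ α : X ⊕ Unit → Bool, S' (α ∘ π) = true → U' α = true) ↔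
      (∃ c : A → Fin m, ∀ i : Fin m, ∑ a ∈ Finset.univ.filter fun a => c a = i, s a = B) :=
  stmt_11_general m B hm s p q hp hq S' U' hS' hU'
end

section
/- Let m ≥ 1 and B ≥ 1 be integers, let A be a finite set, and let s : A → ℕ satisfy s(a) ≥ 1 for all a ∈ A and Σ_{a∈A} s(a) = mB. Let X be a finite set of variables equipped with maps p : X → {1,…,m} and q : X → A such that every fiber p⁻¹(i) has exactly B elements and every fiber q⁻¹(a) has exactly s(a) elements, and let f and t be two distinct fresh variables not in X. Define Boolean functions over X ∪ {f,t} by S''(α) = ¬α(f) ∧ α(t) ∧ (α is constant on every fiber of p) and U''(α) = ¬α(f) ∧ α(t) ∧ (α is constant on every fiber of q). Then S'' isomorphically implies U'' if and only if there is a map c : A → {1,…,m} such that Σ_{a : c(a)=i} s(a) = B for every i ∈ {1,…,m}. -/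
/-!
An assignment satisfying `S''` is the same as a Boolean colouring of the `p`-fibres, with `f`
false and `t` true. Colouring all fibres true, resp. all false, shows that a permutation
witnessing `S'' ⇒̃ U''` must fix `f` and `t`, so it acts by a permutation `τ` of `X`; colouring
one fibre true shows that `p ∘ τ` is constant on the fibres of `q`, i.e. `p ∘ τ = c ∘ q`.
Comparing fibre sizes, `c` sends parts of total size `B` to each `i`. Conversely such a `c`
gives `c ∘ q` the same fibre sizes as `p`, hence `c ∘ q ∘ σ = p` for a permutation `σ`, and
`σ` (fixing `f` and `t`) witnesses the implication.
-/

open Finset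

namespace Finset

theorem card_filter_comp_eq_sum_card_filter {X A ι : Type*} [Fintype X] [Fintype A]
    [DecidableEq A] [DecidableEq ι] (q : X → A) (c : A → ι) (i : ι) :
    #{x | c (q x) = i} = ∑ a with c a = i, #{x | q x = a} := by
  rw [card_eq_sum_card_fiberwise (f := q) (t := {a | c a = i}) (by intro x; simp)]
  refine sum_congr rfl fun a ha => ?_
  rw [filter_filter]
  congr 1
  ext x
  simp only [mem_filter, mem_univ, true_and, and_iff_right_iff_imp]
  rintro rfl
  exact (mem_filter.mp ha).2

end Finset

section FiberSizes

variable {X A ι : Type*} [Fintype X] [DecidableEq ι]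

theorem exists_perm_comp_eq_of_card_filter_eq {f g : X → ι}
    (h : ∀ i, #{x | f x = i} = #{x | g x = i}) : ∃ σ : Equiv.Perm X, ∀ x, g (σ x) = f x :=
  ⟨Equiv.ofFiberEquiv fun i => Fintype.equivOfCardEq <| by
    rw [Fintype.card_subtype, Fintype.card_subtype, h], Equiv.ofFiberEquiv_map _⟩

theorem card_filter_comp_perm (f : X → ι) (τ : Equiv.Perm X) (i : ι) :
    #{x | f (τ x) = i} = #{x | f x = i} :=
  card_equiv τ (by simp)

theorem exists_perm_const_on_fibers_iff {p : X → ι} {q : X → A} (hq : Function.Surjective q) :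
    (∃ τ : Equiv.Perm X, ∀ x x', q x = q x' → p (τ x) = p (τ x')) ↔
      ∃ c : A → ι, ∀ i, #{x | c (q x) = i} = #{x | p x = i} := by
  constructor
  · rintro ⟨τ, hτ⟩
    refine ⟨p ∘ τ ∘ Function.surjInv hq, fun i => ?_⟩
    have hfactor : ∀ x, p (τ (Function.surjInv hq (q x))) = p (τ x) := fun x =>
      hτ _ _ (Function.surjInv_eq hq _)
    simp only [Function.comp_apply, hfactor, card_filter_comp_perm]
  · rintro ⟨c, hc⟩
    obtain ⟨σ, hσ⟩ := exists_perm_comp_eq_of_card_filter_eq fun i => (hc i).symm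
    refine ⟨σ.symm, fun x x' hxx' => ?_⟩
    rw [← hσ, ← hσ, Equiv.apply_symm_apply, Equiv.apply_symm_apply, hxx']

end FiberSizes

section PinnedFiberwiseConst

variable {X ι κ : Type*}

def PinnedFiberwiseConst (p : X → ι) (α : X ⊕ Bool → Bool) : Prop :=
  α (Sum.inr false) = false ∧ α (Sum.inr true) = true ∧
    ∀ x x', p x = p x' → α (Sum.inl x) = α (Sum.inl x')

theorem pinnedFiberwiseConst_elim (p : X → ι) (v : ι → Bool) :
    PinnedFiberwiseConst p (Sum.elim (v ∘ p) id) :=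
  ⟨rfl, rfl, fun x x' h => by simp [h]⟩

theorem exists_perm_of_perm_sum_fixes_inr [Finite X] (π : Equiv.Perm (X ⊕ Bool))
    (hπ : ∀ b, π (Sum.inr b) = Sum.inr b) :
    ∃ τ : Equiv.Perm X, ∀ x, π (Sum.inl x) = Sum.inl (τ x) := by
  have hinl : ∀ x, ∃ y, π (Sum.inl x) = Sum.inl y := by
    intro x
    rcases hx : π (Sum.inl x) with y | b
    · exact ⟨y, rfl⟩
    · exact absurd (π.injective (hx.trans (hπ b).symm)) Sum.inl_ne_inr
  choose τ hτ using hinl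
  have hinj : Function.Injective τ := fun x x' h =>
    Sum.inl_injective (π.injective (by rw [hτ, hτ, h]))
  exact ⟨Equiv.ofBijective τ (Finite.injective_iff_bijective.mp hinj), hτ⟩

theorem PinnedFiberwiseConst.comp_perm_sumCongr {p : X → ι} {q : X → κ} (τ : Equiv.Perm X)
    (hτ : ∀ x x', q x = q x' → p (τ x) = p (τ x')) {α : X ⊕ Bool → Bool}
    (hα : PinnedFiberwiseConst p (α ∘ Equiv.sumCongr τ.symm (Equiv.refl Bool))) :
    PinnedFiberwiseConst q α := by
  obtain ⟨hf, ht, hconst⟩ := hα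
  refine ⟨hf, ht, fun y y' hyy' => ?_⟩
  simpa using hconst (τ y) (τ y') (hτ y y' hyy')

theorem exists_perm_iff_of_pinnedFiberwiseConst [Finite X] (p : X → ι) (q : X → κ) :
    (∃ π : Equiv.Perm (X ⊕ Bool),
        ∀ α, PinnedFiberwiseConst p (α ∘ π) → PinnedFiberwiseConst q α) ↔
      ∃ τ : Equiv.Perm X, ∀ x x', q x = q x' → p (τ x) = p (τ x') := by
  classical
  constructor
  · rintro ⟨π, hπ⟩
    have key : ∀ v : ι → Bool, PinnedFiberwiseConst q (Sum.elim (v ∘ p) id ∘ π.symm) :=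
      fun v => hπ _ (by simpa [Function.comp_assoc] using pinnedFiberwiseConst_elim p v)
    have hfix : ∀ b, π.symm (Sum.inr b) = Sum.inr b := by
      intro b
      have hb : Sum.elim ((fun _ => !b) ∘ p) id (π.symm (Sum.inr b)) = b := by
        cases b
        · exact (key _).1
        · exact (key _).2.1
      rcases hx : π.symm (Sum.inr b) with x | b'
      · simp [hx] at hb
      · simp only [hx, Sum.elim_inr, id] at hb
        rw [hb]
    obtain ⟨τ, hτ⟩ := exists_perm_of_perm_sum_fixes_inr π.symm hfix
    refine ⟨τ, fun x x' hxx' => ?_⟩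
    have := (key fun j => decide (j = p (τ x))).2.2 x x' hxx'
    simp only [Function.comp_apply, hτ, Sum.elim_inl] at this
    simpa [eq_comm] using this
  · rintro ⟨τ, hτ⟩
    exact ⟨Equiv.sumCongr τ.symm (Equiv.refl Bool), fun α => .comp_perm_sumCongr τ hτ⟩

end PinnedFiberwiseConst

theorem stmt_12_general (m B : ℕ)
    {A : Type*} [Fintype A] [DecidableEq A] (s : A → ℕ)
    (hs : ∀ a : A, 1 ≤ s a)
    {X : Type*} [Fintype X] (p : X → Fin m) (q : X → A)
    (hp : ∀ i : Fin m, (Finset.univ.filter fun x => p x = i).card = B)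
    (hq : ∀ a : A, (Finset.univ.filter fun x => q x = a).card = s a)
    (S'' U'' : (X ⊕ Bool → Bool) → Bool)
    (hS'' : ∀ α : X ⊕ Bool → Bool, S'' α = true ↔
      (α (Sum.inr false) = false ∧ α (Sum.inr true) = true ∧
        ∀ x x' : X, p x = p x' → α (Sum.inl x) = α (Sum.inl x')))
    (hU'' : ∀ α : X ⊕ Bool → Bool, U'' α = true ↔
      (α (Sum.inr false) = false ∧ α (Sum.inr true) = true ∧
        ∀ x x' : X, q x = q x' → α (Sum.inl x) = α (Sum.inl x'))) :
    (∃ π : Equiv.Perm (X ⊕ Bool), ∀ α : X ⊕ Bool → Bool, S'' (α ∘ π) = true → U'' α = true) ↔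
      (∃ c : A → Fin m, ∀ i : Fin m, ∑ a ∈ Finset.univ.filter fun a => c a = i, s a = B) := by
  have hq_surj : Function.Surjective q := fun a => by
    obtain ⟨x, hx⟩ := card_pos.mp ((hq a).symm ▸ hs a : 0 < #{x | q x = a})
    exact ⟨x, (mem_filter.mp hx).2⟩
  calc (∃ π : Equiv.Perm (X ⊕ Bool), ∀ α, S'' (α ∘ π) = true → U'' α = true)
      ↔ ∃ π : Equiv.Perm (X ⊕ Bool),
          ∀ α, PinnedFiberwiseConst p (α ∘ π) → PinnedFiberwiseConst q α :=
        exists_congr fun _ => forall_congr' fun α => imp_congr (hS'' _) (hU'' α)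
    _ ↔ ∃ τ : Equiv.Perm X, ∀ x x', q x = q x' → p (τ x) = p (τ x') :=
        exists_perm_iff_of_pinnedFiberwiseConst p q
    _ ↔ ∃ c : A → Fin m, ∀ i, #{x | c (q x) = i} = #{x | p x = i} :=
        exists_perm_const_on_fibers_iff hq_surj
    _ ↔ _ := by
        simp only [card_filter_comp_eq_sum_card_filter, hq, hp]

/-- Like STATEMENT 10 but with distinct fresh variables `f`, `t` (modeled as
`Sum.inr false`, `Sum.inr true` in `X ⊕ Bool`),
`S''(α) = ¬α(f) ∧ α(t) ∧ (α constant on fibers of p)` and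
`U''(α) = ¬α(f) ∧ α(t) ∧ (α constant on fibers of q)`: `S'' ⇒̃ U''` iff `A` can be
partitioned via `c : A → Fin m` so that each part has total size `B`. -/
theorem stmt_12 (m B : ℕ) (hm : 1 ≤ m) (hB : 1 ≤ B)
    {A : Type*} [Fintype A] [DecidableEq A] (s : A → ℕ)
    (hs : ∀ a : A, 1 ≤ s a) (hsum : ∑ a : A, s a = m * B)
    {X : Type*} [Fintype X] [DecidableEq X] (p : X → Fin m) (q : X → A)
    (hp : ∀ i : Fin m, (Finset.univ.filter fun x => p x = i).card = B)
    (hq : ∀ a : A, (Finset.univ.filter fun x => q x = a).card = s a)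
    (S'' U'' : (X ⊕ Bool → Bool) → Bool)
    (hS'' : ∀ α : X ⊕ Bool → Bool, S'' α = true ↔
      (α (Sum.inr false) = false ∧ α (Sum.inr true) = true ∧
        ∀ x x' : X, p x = p x' → α (Sum.inl x) = α (Sum.inl x')))
    (hU'' : ∀ α : X ⊕ Bool → Bool, U'' α = true ↔
      (α (Sum.inr false) = false ∧ α (Sum.inr true) = true ∧
        ∀ x x' : X, q x = q x' → α (Sum.inl x) = α (Sum.inl x'))) :
    (∃ π : Equiv.Perm (X ⊕ Bool), ∀ α : X ⊕ Bool → Bool, S'' (α ∘ π) = true → U'' α = true) ↔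
      (∃ c : A → Fin m, ∀ i : Fin m, ∑ a ∈ Finset.univ.filter fun a => c a = i, s a = B) :=
  stmt_12_general m B s hs p q hp hq S'' U'' hS'' hU''
end

section
/- Let m ≥ 1 and B ≥ 1 be integers, let A be a finite set, and let s : A → ℕ satisfy s(a) ≥ 1 for all a ∈ A and Σ_{a∈A} s(a) = mB. Let Z be a finite set of variables equipped with maps p : Z → {1,…,m}, σ : Z → {0,1}, q : Z → A, and τ : Z → {0,1} such that for every i and every b ∈ {0,1} the set {z : p(z)=i, σ(z)=b} has exactly B elements, and for every a ∈ A and every b ∈ {0,1} the set {z : q(z)=a, τ(z)=b} has exactly s(a) elements. Define Boolean functions over Z by S(α) = true iff α(z) ≠ α(z') whenever p(z) = p(z') and σ(z) ≠ σ(z'), and U(α) = true iff α(z) ≠ α(z') whenever q(z) = q(z') and τ(z) ≠ τ(z'). Then S isomorphically implies U if and only if there is a map c : A → {1,…,m} such that Σ_{a : c(a)=i} s(a) = B for every i ∈ {1,…,m}. -/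
/-!
The assignments satisfying `S` are `σ` flipped on an arbitrary set of `p`-classes. If `π` witnesses
`S ⇒̃ U`, two variables of one `q`-class with different `τ` are sent by `π⁻¹` into the same
`p`-class: otherwise flipping one of the two `p`-classes gives an assignment of `S` whose transport
violates `U`. Since every `q`-class meets both values of `τ`, `p ∘ π⁻¹ = c ∘ q` for some `c`, and
counting the `p`-class `i` (of size `2B`) gives `∑_{c a = i} s a = B`. Conversely, such a `c`
makes the fibres of `(c ∘ q, τ)` and `(p, σ)` equinumerous, and a permutation matching these
fibres transports every `S`-constraint onto a `U`-constraint.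
-/

open Finset

def XorConstraint {Z P : Type*} (part : Z → P) (side : Z → Bool) (α : Z → Bool) : Prop :=
  ∀ z z', part z = part z' → side z ≠ side z' → α z ≠ α z'

section XorConstraint

variable {Z Z' P P' : Type*} {part : Z → P} {side : Z → Bool}

theorem XorConstraint.comp {α : Z → Bool} (h : XorConstraint part side α)
    {part' : Z' → P'} {side' : Z' → Bool} (ρ : Z' → Z) (c : P' → P)
    (hpart : ∀ z, part (ρ z) = c (part' z)) (hside : ∀ z, side (ρ z) = side' z) :
    XorConstraint part' side' (α ∘ ρ) := fun z z' hp hs =>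
  h (ρ z) (ρ z') (by rw [hpart, hpart, hp]) (by rwa [hside, hside])

theorem exists_xorConstraint_eq_of_part_ne [DecidableEq P] {z z' : Z}
    (hne : part z ≠ part z') : ∃ α, XorConstraint part side α ∧ α z = α z' := by
  -- `α z = α z' = false`
  let flip : P → Bool := fun i => if i = part z then side z else side z'
  refine ⟨fun x => xor (side x) (flip (part x)), fun x y hxy hside => ?_, ?_⟩
  · simpa [hxy] using hside
  · simp [flip, Ne.symm hne]

theorem part_symm_eq_of_forall_xorConstraint {Q : Type*} {q : Z → Q} {τ : Z → Bool}
    {π : Equiv.Perm Z} (H : ∀ α, XorConstraint part side (α ∘ π) → XorConstraint q τ α)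
    {w w' : Z} (hq : q w = q w') (hτ : τ w ≠ τ w') : part (π.symm w) = part (π.symm w') := by
  classical
  by_contra hne
  obtain ⟨α, hα, heq⟩ := exists_xorConstraint_eq_of_part_ne (side := side) hne
  exact H (α ∘ π.symm) (by simpa [Function.comp_def] using hα) w w' hq hτ heq

theorem exists_comp_eq_of_forall_xorConstraint {Q : Type*} {q : Z → Q} {τ : Z → Bool}
    {π : Equiv.Perm Z} (hfib : ∀ a b, ∃ z, q z = a ∧ τ z = b)
    (H : ∀ α, XorConstraint part side (α ∘ π) → XorConstraint q τ α) :
    ∃ c : Q → P, ∀ w, part (π.symm w) = c (q w) := by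
  choose r hr using hfib
  refine ⟨fun a => part (π.symm (r a false)), fun w => ?_⟩
  have key {w w' : Z} := part_symm_eq_of_forall_xorConstraint H (w := w) (w' := w')
  cases hw : τ w
  · rw [key (hr (q w) true).1.symm (by simp [hw, hr]),
      key (w' := r (q w) false) (by simp [hr]) (by simp [hr])]
  · exact key (hr (q w) false).1.symm (by simp [hw, hr])

end XorConstraint

section Counting

variable {Z : Type*} [Fintype Z]

theorem card_filter_eq_two_mul_of_card_filter_and_eq (P : Z → Prop) [DecidablePred P]
    (t : Z → Bool) {n : ℕ} (h : ∀ b, #{z | P z ∧ t z = b} = n) : #{z | P z} = 2 * n := by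
  rw [card_eq_sum_card_fiberwise (f := t) (t := univ) (fun _ _ => mem_univ _)]
  simp [filter_filter, h]

theorem card_filter_comp_and_eq_sum {A I : Type*} [Fintype A] [DecidableEq A] [DecidableEq I]
    (q : Z → A) (c : A → I) (P : Z → Prop) [DecidablePred P] (i : I) :
    #{z | c (q z) = i ∧ P z} = ∑ a with c a = i, #{z | q z = a ∧ P z} := by
  rw [card_eq_sum_card_fiberwise (f := q) (t := {a | c a = i}) fun z hz => by simp_all]
  refine sum_congr rfl fun a ha => congrArg card ?_
  ext z
  simp only [mem_filter, mem_univ, true_and] at ha ⊢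
  grind

theorem exists_perm_comp_eq_of_card_fiber_eq {Y : Type*} [DecidableEq Y] {f g : Z → Y}
    (h : ∀ y, #{z | f z = y} = #{z | g z = y}) : ∃ ρ : Equiv.Perm Z, ∀ z, g (ρ z) = f z :=
  ⟨Equiv.ofFiberEquiv fun y => Fintype.equivOfCardEq (by simpa [Fintype.card_subtype] using h y),
    Equiv.ofFiberEquiv_map _⟩

end Counting

theorem stmt_13_general (m B : ℕ)
    {A : Type*} [Fintype A] [DecidableEq A] (s : A → ℕ)
    (hs : ∀ a : A, 1 ≤ s a)
    {Z : Type*} [Fintype Z]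
    (p : Z → Fin m) (σ : Z → Bool) (q : Z → A) (τ : Z → Bool)
    (hp : ∀ i : Fin m, ∀ b : Bool, (Finset.univ.filter fun z => p z = i ∧ σ z = b).card = B)
    (hq : ∀ a : A, ∀ b : Bool, (Finset.univ.filter fun z => q z = a ∧ τ z = b).card = s a)
    (S U : (Z → Bool) → Bool)
    (hS : ∀ α : Z → Bool, S α = true ↔
      ∀ z z' : Z, p z = p z' → σ z ≠ σ z' → α z ≠ α z')
    (hU : ∀ α : Z → Bool, U α = true ↔
      ∀ z z' : Z, q z = q z' → τ z ≠ τ z' → α z ≠ α z') :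
    (∃ π : Equiv.Perm Z, ∀ α : Z → Bool, S (α ∘ π) = true → U α = true) ↔
      (∃ c : A → Fin m, ∀ i : Fin m, ∑ a ∈ Finset.univ.filter fun a => c a = i, s a = B) := by
  have hfiber (c : A → Fin m) (i : Fin m) (b : Bool) :
      #{z | c (q z) = i ∧ τ z = b} = ∑ a with c a = i, s a := by
    simp only [card_filter_comp_and_eq_sum, hq]
  constructor
  · rintro ⟨π, H⟩
    have hfib (a : A) (b : Bool) : ∃ z, q z = a ∧ τ z = b := by
      obtain ⟨z, hz⟩ := card_pos.1 (hq a b ▸ hs a)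
      exact ⟨z, by simpa using hz⟩
    obtain ⟨c, hc⟩ := exists_comp_eq_of_forall_xorConstraint (part := p) (side := σ) hfib
      fun α h => (hU α).1 (H α ((hS _).2 h))
    refine ⟨c, fun i => ?_⟩
    have hcard : #{w | c (q w) = i} = #{z | p z = i} := card_equiv π.symm (by simp [hc])
    rw [card_filter_eq_two_mul_of_card_filter_and_eq _ τ (hfiber c i),
      card_filter_eq_two_mul_of_card_filter_and_eq _ σ (hp i)] at hcard
    omega
  · rintro ⟨c, hc⟩
    obtain ⟨ρ, hρ⟩ := exists_perm_comp_eq_of_card_fiber_eq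
      (f := fun z => (c (q z), τ z)) (g := fun z => (p z, σ z))
      fun ⟨i, b⟩ => by simpa only [Prod.ext_iff, hfiber, hc] using (hp i b).symm
    refine ⟨ρ.symm, fun α hα => (hU α).2 ?_⟩
    have h := XorConstraint.comp ((hS _).1 hα) ρ c (fun z => congrArg Prod.fst (hρ z))
      (fun z => congrArg Prod.snd (hρ z))
    rwa [Function.comp_assoc, Equiv.symm_comp_self, Function.comp_id] at h

/-- XOR version of the 3-partition reduction. `Z` carries
`p : Z → Fin m`, `σ : Z → Bool`, `q : Z → A`, `τ : Z → Bool` with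
`|{z : p z = i, σ z = b}| = B` and `|{z : q z = a, τ z = b}| = s a`.
`S(α)` holds iff `α z ≠ α z'` whenever `p z = p z'` and `σ z ≠ σ z'`;
`U(α)` holds iff `α z ≠ α z'` whenever `q z = q z'` and `τ z ≠ τ z'`.
Then `S ⇒̃ U` iff `A` can be partitioned via `c : A → Fin m` so that each
part has total size `B`. -/
theorem stmt_13 (m B : ℕ) (hm : 1 ≤ m) (hB : 1 ≤ B)
    {A : Type*} [Fintype A] [DecidableEq A] (s : A → ℕ)
    (hs : ∀ a : A, 1 ≤ s a) (hsum : ∑ a : A, s a = m * B)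
    {Z : Type*} [Fintype Z] [DecidableEq Z]
    (p : Z → Fin m) (σ : Z → Bool) (q : Z → A) (τ : Z → Bool)
    (hp : ∀ i : Fin m, ∀ b : Bool, (Finset.univ.filter fun z => p z = i ∧ σ z = b).card = B)
    (hq : ∀ a : A, ∀ b : Bool, (Finset.univ.filter fun z => q z = a ∧ τ z = b).card = s a)
    (S U : (Z → Bool) → Bool)
    (hS : ∀ α : Z → Bool, S α = true ↔
      ∀ z z' : Z, p z = p z' → σ z ≠ σ z' → α z ≠ α z')
    (hU : ∀ α : Z → Bool, U α = true ↔
      ∀ z z' : Z, q z = q z' → τ z ≠ τ z' → α z ≠ α z') :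
    (∃ π : Equiv.Perm Z, ∀ α : Z → Bool, S (α ∘ π) = true → U α = true) ↔
      (∃ c : A → Fin m, ∀ i : Fin m, ∑ a ∈ Finset.univ.filter fun a => c a = i, s a = B) :=
  stmt_13_general m B s hs p σ q τ hp hq S U hS hU
end

section
/- Let m ≥ 1 and B ≥ 1 be integers, let A be a finite set, and let s : A → ℕ satisfy s(a) ≥ 1 for all a ∈ A and Σ_{a∈A} s(a) = mB. Let Z be a finite set of variables equipped with maps p : Z → {1,…,m}, σ : Z → {0,1}, q : Z → A, and τ : Z → {0,1} such that for every i and every b ∈ {0,1} the set {z : p(z)=i, σ(z)=b} has exactly B elements, and for every a ∈ A and every b ∈ {0,1} the set {z : q(z)=a, τ(z)=b} has exactly s(a) elements. Let f and t be two distinct fresh variables not in Z. Define Boolean functions over Z ∪ {f,t} by S'(α) = ¬α(f) ∧ α(t) ∧ (α(z) ≠ α(z') whenever p(z) = p(z') and σ(z) ≠ σ(z')), and U'(α) = ¬α(f) ∧ α(t) ∧ (α(z) ≠ α(z') whenever q(z) = q(z') and τ(z) ≠ τ(z')). Then S' isomorphically implies U' if and only if there is a map c : A → {1,…,m} such that Σ_{a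 : c(a)=i} s(a) = B for every i ∈ {1,…,m}. -/
/-!
An isomorphic implication `π(S') ⇒ U'` must fix `f` and `t`, so it is a bijection `g` of `Z`.
Testing it on the satisfying assignments `z ↦ v (p z) xor σ z` of `S'` (one for each
`v : Fin m → Bool`) shows that `p ∘ g` is constant on every pair `q z = q z'`, `τ z ≠ τ z'`; as
each `q`-class contains both `τ`-values, `p ∘ g = c ∘ q` for some `c`, and counting the
`2B` elements of each `p`-class gives `∑_{c a = i} 2 s a = 2B`. Conversely, a partition `c`
makes the classes of `(c ∘ q, τ)` and of `(p, σ)` equinumerous, and any bijection matching them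
transports `S'` onto `U'`.
-/

theorem Equiv.exists_apply_inl_of_apply_inr {α β γ : Type*} (e : α ⊕ γ ≃ β ⊕ γ)
    (he : ∀ c, e (.inr c) = .inr c) : ∃ g : α ≃ β, ∀ a, e (.inl a) = .inl (g a) := by
  have hleft : ∀ x, x.isLeft ↔ (e x).isLeft := by
    rintro (a | c)
    · cases hx : e (.inl a) with
      | inl b => simp
      | inr c => simpa using e.injective (hx.trans (he c).symm)
    · simp [he]
  refine ⟨sumIsLeft.symm.trans ((e.subtypeEquiv hleft).trans sumIsLeft), fun a => ?_⟩
  cases hx : e (.inl a) with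
  | inl b => simp [hx]
  | inr c => simpa using e.injective (hx.trans (he c).symm)

theorem Fintype.exists_equiv_of_card_fiber_eq {Z W Y : Type*} [Fintype Z] [Fintype W]
    [DecidableEq Y] {f : Z → Y} {g : W → Y}
    (h : ∀ y, card {z // f z = y} = card {w // g w = y}) : ∃ e : Z ≃ W, ∀ z, g (e z) = f z :=
  ⟨_, Equiv.ofFiberEquiv_map fun y => equivOfCardEq (h y)⟩

theorem exists_eq_comp_of_eq_of_ne {Z A X : Type*} {q : Z → A} {τ : Z → Bool} {r : Z → X}
    (hfib : ∀ a b, ∃ z, q z = a ∧ τ z = b)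
    (hr : ∀ z z', q z = q z' → τ z ≠ τ z' → r z = r z') :
    ∃ c : A → X, ∀ z, r z = c (q z) := by
  choose z₀ hq₀ hτ₀ using fun a => hfib a false
  choose z₁ hq₁ hτ₁ using fun a => hfib a true
  refine ⟨fun a => r (z₀ a), fun z => ?_⟩
  cases hτ : τ z
  · exact (hr z (z₁ (q z)) (hq₁ _).symm (by simp [hτ, hτ₁])).trans
      (hr (z₀ (q z)) (z₁ (q z)) (by rw [hq₀, hq₁]) (by simp [hτ₀, hτ₁])).symm
  · exact hr z (z₀ (q z)) (hq₀ _).symm (by simp [hτ, hτ₀])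

section Counting

open Finset

variable {Z A ι : Type*} [Fintype Z] [DecidableEq ι]

theorem card_filter_eq_add_of_bool (k : Z → ι) (σ : Z → Bool) (i : ι) :
    #{z | k z = i} = #{z | k z = i ∧ σ z = false} + #{z | k z = i ∧ σ z = true} := by
  rw [← card_filter_add_card_filter_not (s := {z | k z = i}) (fun z => σ z = false)]
  simp only [filter_filter, Bool.not_eq_false]

theorem card_filter_comp_eq_sum [Fintype A] [DecidableEq A] (q : Z → A) (c : A → ι) (R : Z → Prop)
    [DecidablePred R] (i : ι) :
    #{z | c (q z) = i ∧ R z} = ∑ a with c a = i, #{z | q z = a ∧ R z} := by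
  rw [card_eq_sum_card_fiberwise (f := q) (t := {a | c a = i}) fun z hz => by simp_all]
  refine sum_congr rfl fun a ha => congrArg card ?_
  ext z
  simp only [mem_filter, mem_univ, true_and] at ha ⊢
  constructor
  · rintro ⟨⟨-, hR⟩, rfl⟩
    exact ⟨rfl, hR⟩
  · rintro ⟨rfl, hR⟩
    exact ⟨⟨ha, hR⟩, rfl⟩

end Counting

section PairFormula

variable {W Z ι κ : Type*}

-- `Sum.inr false` and `Sum.inr true` are the fresh variables `f` and `t`.
def pairFormula (k : Z → ι) (σ : Z → Bool) (α : Z ⊕ Bool → Bool) : Prop :=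
  α (.inr false) = false ∧ α (.inr true) = true ∧
    ∀ z z', k z = k z' → σ z ≠ σ z' → α (.inl z) ≠ α (.inl z')

theorem pairFormula_comp_sumCongr {k : W → ι} {σ : W → Bool} {l : Z → κ} {τ : Z → Bool}
    (g : Z ≃ W) (hk : ∀ z z', l z = l z' → τ z ≠ τ z' → k (g z) = k (g z'))
    (hσ : ∀ z, σ (g z) = τ z) {α : Z ⊕ Bool → Bool}
    (hα : pairFormula k σ (α ∘ Equiv.sumCongr g.symm (Equiv.refl Bool))) :
    pairFormula l τ α := by
  obtain ⟨hf, ht, hsplit⟩ := hα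
  refine ⟨hf, ht, fun z z' hl hτ => ?_⟩
  simpa using hsplit (g z) (g z') (hk z z' hl hτ) (by rwa [hσ, hσ])

def splitAssignment (k : W → ι) (σ : W → Bool) (v : ι → Bool) : W ⊕ Bool → Bool :=
  Sum.elim (fun w => xor (v (k w)) (σ w)) id

theorem pairFormula_splitAssignment (k : W → ι) (σ : W → Bool) (v : ι → Bool) :
    pairFormula k σ (splitAssignment k σ v) :=
  ⟨rfl, rfl, fun w w' hk hσ => by simpa [splitAssignment, hk] using hσ⟩

theorem eq_inr_of_forall_splitAssignment_eq {k : W → ι} {σ : W → Bool} {x : W ⊕ Bool} {b : Bool}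
    (h : ∀ v, splitAssignment k σ v x = b) : x = .inr b := by
  cases x with
  | inl w => simpa [splitAssignment] using h fun _ => xor (!b) (σ w)
  | inr b' => simpa [splitAssignment] using h fun _ => b

theorem eq_of_forall_splitAssignment_ne {k : W → ι} {σ : W → Bool} {w w' : W}
    (h : ∀ v, splitAssignment k σ v (.inl w) ≠ splitAssignment k σ v (.inl w')) :
    k w = k w' := by
  classical
  by_contra hne
  apply h fun i => if i = k w then σ w else σ w'
  simp [splitAssignment, Ne.symm hne]

theorem exists_equiv_of_pairFormula_imp {k : W → ι} {σ : W → Bool} {l : Z → κ} {τ : Z → Bool}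
    (π : W ⊕ Bool ≃ Z ⊕ Bool) (hπ : ∀ α, pairFormula k σ (α ∘ π) → pairFormula l τ α) :
    ∃ g : Z ≃ W, ∀ z z', l z = l z' → τ z ≠ τ z' → k (g z) = k (g z') := by
  have hsat : ∀ v, pairFormula l τ (splitAssignment k σ v ∘ π.symm) := fun v =>
    hπ _ (by simpa [Function.comp_def] using pairFormula_splitAssignment k σ v)
  have hfix : ∀ b, π.symm (.inr b) = .inr b := fun b =>
    eq_inr_of_forall_splitAssignment_eq fun v => by
      cases b
      exacts [(hsat v).1, (hsat v).2.1]
  obtain ⟨g, hg⟩ := π.symm.exists_apply_inl_of_apply_inr hfix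
  refine ⟨g, fun z z' hl hτ => eq_of_forall_splitAssignment_ne (σ := σ) fun v => ?_⟩
  rw [← hg, ← hg]
  exact (hsat v).2.2 z z' hl hτ

end PairFormula

theorem stmt_14_general (m B : ℕ)
    {A : Type*} [Fintype A] [DecidableEq A] (s : A → ℕ)
    (hs : ∀ a : A, 1 ≤ s a)
    {Z : Type*} [Fintype Z]
    (p : Z → Fin m) (σ : Z → Bool) (q : Z → A) (τ : Z → Bool)
    (hp : ∀ i : Fin m, ∀ b : Bool, (Finset.univ.filter fun z => p z = i ∧ σ z = b).card = B)
    (hq : ∀ a : A, ∀ b : Bool, (Finset.univ.filter fun z => q z = a ∧ τ z = b).card = s a)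
    (S' U' : (Z ⊕ Bool → Bool) → Bool)
    (hS' : ∀ α : Z ⊕ Bool → Bool, S' α = true ↔
      (α (Sum.inr false) = false ∧ α (Sum.inr true) = true ∧
        ∀ z z' : Z, p z = p z' → σ z ≠ σ z' → α (Sum.inl z) ≠ α (Sum.inl z')))
    (hU' : ∀ α : Z ⊕ Bool → Bool, U' α = true ↔
      (α (Sum.inr false) = false ∧ α (Sum.inr true) = true ∧
        ∀ z z' : Z, q z = q z' → τ z ≠ τ z' → α (Sum.inl z) ≠ α (Sum.inl z'))) :
    (∃ π : Equiv.Perm (Z ⊕ Bool), ∀ α : Z ⊕ Bool → Bool, S' (α ∘ π) = true → U' α = true) ↔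
      (∃ c : A → Fin m, ∀ i : Fin m, ∑ a ∈ Finset.univ.filter fun a => c a = i, s a = B) := by
  have hS : ∀ α, S' α = true ↔ pairFormula p σ α := hS'
  have hU : ∀ α, U' α = true ↔ pairFormula q τ α := hU'
  have hcq (c : A → Fin m) (i : Fin m) (b : Bool) :
      (Finset.univ.filter fun z => c (q z) = i ∧ τ z = b).card
        = ∑ a ∈ Finset.univ.filter fun a => c a = i, s a := by
    simp only [card_filter_comp_eq_sum, hq]
  simp only [hS, hU]
  constructor
  · rintro ⟨π, hπ⟩
    have hfib (a : A) (b : Bool) : ∃ z, q z = a ∧ τ z = b := by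
      obtain ⟨z, hz⟩ := Finset.card_pos.mp ((hq a b).symm ▸ hs a)
      exact ⟨z, by simpa using hz⟩
    obtain ⟨g, hg⟩ := exists_equiv_of_pairFormula_imp π hπ
    obtain ⟨c, hc⟩ := exists_eq_comp_of_eq_of_ne hfib hg
    refine ⟨c, fun i => ?_⟩
    have hcard := Finset.card_equiv (s := Finset.univ.filter fun z => c (q z) = i)
      (t := Finset.univ.filter fun w => p w = i) g fun z => by simp [hc]
    have hcq_split := card_filter_eq_add_of_bool (fun z => c (q z)) τ i
    have hp_split := card_filter_eq_add_of_bool p σ i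
    rw [hcq, hcq] at hcq_split
    rw [hp, hp] at hp_split
    omega
  · rintro ⟨c, hc⟩
    obtain ⟨g, hg⟩ := Fintype.exists_equiv_of_card_fiber_eq
      (f := fun z => (c (q z), τ z)) (g := fun w => (p w, σ w)) fun ⟨i, b⟩ => by
        simp only [Fintype.card_subtype, Prod.mk.injEq, hp, hcq, hc]
    refine ⟨Equiv.sumCongr g.symm (Equiv.refl _), fun α => pairFormula_comp_sumCongr g
      (fun z z' hl _ => ?_) (fun z => congrArg Prod.snd (hg z))⟩
    simp only [Prod.ext_iff] at hg
    rw [(hg z).1, (hg z').1, hl]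

/-- Like STATEMENT 13 but with distinct fresh variables `f`, `t`
(modeled as `Sum.inr false`, `Sum.inr true` in `Z ⊕ Bool`), where
`S'(α) = ¬α(f) ∧ α(t) ∧ (α z ≠ α z' whenever p z = p z' and σ z ≠ σ z')` and
`U'(α) = ¬α(f) ∧ α(t) ∧ (α z ≠ α z' whenever q z = q z' and τ z ≠ τ z')`.
Then `S' ⇒̃ U'` iff `A` can be partitioned via `c : A → Fin m` so that each
part has total size `B`. -/
theorem stmt_14 (m B : ℕ) (hm : 1 ≤ m) (hB : 1 ≤ B)
    {A : Type*} [Fintype A] [DecidableEq A] (s : A → ℕ)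
    (hs : ∀ a : A, 1 ≤ s a) (hsum : ∑ a : A, s a = m * B)
    {Z : Type*} [Fintype Z] [DecidableEq Z]
    (p : Z → Fin m) (σ : Z → Bool) (q : Z → A) (τ : Z → Bool)
    (hp : ∀ i : Fin m, ∀ b : Bool, (Finset.univ.filter fun z => p z = i ∧ σ z = b).card = B)
    (hq : ∀ a : A, ∀ b : Bool, (Finset.univ.filter fun z => q z = a ∧ τ z = b).card = s a)
    (S' U' : (Z ⊕ Bool → Bool) → Bool)
    (hS' : ∀ α : Z ⊕ Bool → Bool, S' α = true ↔
      (α (Sum.inr false) = false ∧ α (Sum.inr true) = true ∧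
        ∀ z z' : Z, p z = p z' → σ z ≠ σ z' → α (Sum.inl z) ≠ α (Sum.inl z')))
    (hU' : ∀ α : Z ⊕ Bool → Bool, U' α = true ↔
      (α (Sum.inr false) = false ∧ α (Sum.inr true) = true ∧
        ∀ z z' : Z, q z = q z' → τ z ≠ τ z' → α (Sum.inl z) ≠ α (Sum.inl z'))) :
    (∃ π : Equiv.Perm (Z ⊕ Bool), ∀ α : Z ⊕ Bool → Bool, S' (α ∘ π) = true → U' α = true) ↔
      (∃ c : A → Fin m, ∀ i : Fin m, ∑ a ∈ Finset.univ.filter fun a => c a = i, s a = B) :=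
  stmt_14_general m B s hs p σ q τ hp hq S' U' hS' hU'
end

section
/- Let V be a finite set of variables, and let P_S, N_S be disjoint subsets of V and P_U, N_U be disjoint subsets of V, with P_S ∪ N_S ≠ ∅ and P_U ∪ N_U ≠ ∅. Define Boolean functions over V by F_S(a) = true iff a(v) = true for every v ∈ P_S and a(v) = false for every v ∈ N_S, and F_U(a) = true iff a(v) = true for every v ∈ P_U and a(v) = false for every v ∈ N_U. Then F_S isomorphically implies F_U if and only if |P_S| ≥ |P_U| and |N_S| ≥ |N_U|. -/
/-- Auxiliary: given disjoint pairs with card inequalities, there is a permutation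
mapping `PU` into `PS` and `NU` into `NS`. -/
lemma exists_perm_maps {V : Type*} [Fintype V] [DecidableEq V]
    (PS NS PU NU : Finset V)
    (hS : Disjoint PS NS) (hU : Disjoint PU NU)
    (hP : PU.card ≤ PS.card) (hN : NU.card ≤ NS.card) :
    ∃ σ : Equiv.Perm V, (∀ v ∈ PU, σ v ∈ PS) ∧ (∀ v ∈ NU, σ v ∈ NS) := by
  classical
  obtain ⟨PS', hPS'sub, hPS'card⟩ := Finset.exists_subset_card_eq hP
  obtain ⟨NS', hNS'sub, hNS'card⟩ := Finset.exists_subset_card_eq hN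
  have hS' : Disjoint PS' NS' := hS.mono hPS'sub hNS'sub
  have eP : {x : V // x ∈ PU} ≃ {x : V // x ∈ PS'} := Finset.equivOfCardEq hPS'card.symm
  have eN : {x : V // x ∈ NU} ≃ {x : V // x ∈ NS'} := Finset.equivOfCardEq hNS'card.symm
  -- build the equiv between the unions
  let e : {x : V // x ∈ PU ∪ NU} ≃ {x : V // x ∈ PS' ∪ NS'} :=
  { toFun := fun x =>
      if h : x.1 ∈ PU then ⟨(eP ⟨x.1, h⟩).1, Finset.mem_union_left _ (eP ⟨x.1, h⟩).2⟩
      else ⟨(eN ⟨x.1, by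
        rcases Finset.mem_union.mp x.2 with h' | h'
        · exact absurd h' h
        · exact h'⟩).1, Finset.mem_union_right _ (eN _).2⟩
    invFun := fun y =>
      if h : y.1 ∈ PS' then ⟨(eP.symm ⟨y.1, h⟩).1, Finset.mem_union_left _ (eP.symm ⟨y.1, h⟩).2⟩
      else ⟨(eN.symm ⟨y.1, by
        rcases Finset.mem_union.mp y.2 with h' | h'
        · exact absurd h' h
        · exact h'⟩).1, Finset.mem_union_right _ (eN.symm _).2⟩
    left_inv := by
      rintro ⟨x, hx⟩
      by_cases h : x ∈ PU
      · have hmem : (eP ⟨x, h⟩).1 ∈ PS' := (eP ⟨x, h⟩).2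
        simp only [h, dif_pos, hmem]
        congr 1
        have := eP.symm_apply_apply ⟨x, h⟩
        simpa using congrArg Subtype.val this
      · have hx' : x ∈ NU := by
          rcases Finset.mem_union.mp hx with h' | h'
          · exact absurd h' h
          · exact h'
        have hnot : ∀ (p : x ∈ NU), (eN ⟨x, p⟩).1 ∉ PS' :=
          fun p hc => (Finset.disjoint_left.mp hS' hc) (eN ⟨x, p⟩).2
        simp [h, hnot]
    right_inv := by
      rintro ⟨y, hy⟩
      by_cases h : y ∈ PS'
      · have hmem : (eP.symm ⟨y, h⟩).1 ∈ PU := (eP.symm ⟨y, h⟩).2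
        simp only [h, dif_pos, hmem]
        congr 1
        have := eP.apply_symm_apply ⟨y, h⟩
        simpa using congrArg Subtype.val this
      · have hy' : y ∈ NS' := by
          rcases Finset.mem_union.mp hy with h' | h'
          · exact absurd h' h
          · exact h'
        have hnot : ∀ (p : y ∈ NS'), (eN.symm ⟨y, p⟩).1 ∉ PU :=
          fun p hc => (Finset.disjoint_left.mp hU hc) (eN.symm ⟨y, p⟩).2
        simp [h, hnot] }
  refine ⟨e.extendSubtype, ?_, ?_⟩
  · intro v hv
    have hv' : v ∈ PU ∪ NU := Finset.mem_union_left _ hv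
    rw [Equiv.extendSubtype_apply_of_mem e v hv']
    show (e ⟨v, hv'⟩).1 ∈ PS
    have : (e ⟨v, hv'⟩) = ⟨(eP ⟨v, hv⟩).1, Finset.mem_union_left _ (eP ⟨v, hv⟩).2⟩ := by
      show dite _ _ _ = _
      rw [dif_pos hv]
    rw [this]
    exact hPS'sub (eP ⟨v, hv⟩).2
  · intro v hv
    have hv' : v ∈ PU ∪ NU := Finset.mem_union_right _ hv
    have hnp : v ∉ PU := fun hc => (Finset.disjoint_left.mp hU hc) hv
    rw [Equiv.extendSubtype_apply_of_mem e v hv']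
    show (e ⟨v, hv'⟩).1 ∈ NS
    have : (e ⟨v, hv'⟩).1 = (eN ⟨v, hv⟩).1 := by
      show (dite _ _ _ : {x : V // x ∈ PS' ∪ NS'}).1 = _
      rw [dif_neg hnp]
    rw [this]
    exact hNS'sub (eN ⟨v, hv⟩).2

/-- For disjoint `P_S, N_S ⊆ V` and disjoint `P_U, N_U ⊆ V`, each pair with
nonempty union, and conjunctions-of-literals `F_S`, `F_U` as described:
`F_S ⇒̃ F_U` iff `|P_S| ≥ |P_U|` and `|N_S| ≥ |N_U|`. -/
theorem stmt_15 {V : Type*} [Fintype V] [DecidableEq V]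
    (PS NS PU NU : Finset V)
    (hS : Disjoint PS NS) (hU : Disjoint PU NU)
    (hSne : (PS ∪ NS).Nonempty) (hUne : (PU ∪ NU).Nonempty)
    (FS FU : (V → Bool) → Bool)
    (hFS : ∀ a : V → Bool, FS a = true ↔
      ((∀ v ∈ PS, a v = true) ∧ (∀ v ∈ NS, a v = false)))
    (hFU : ∀ a : V → Bool, FU a = true ↔
      ((∀ v ∈ PU, a v = true) ∧ (∀ v ∈ NU, a v = false))) :
    (∃ π : Equiv.Perm V, ∀ a : V → Bool, FS (a ∘ π) = true → FU a = true) ↔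
      (PU.card ≤ PS.card ∧ NU.card ≤ NS.card) := by
  classical
  constructor
  · rintro ⟨π, hπ⟩
    constructor
    · -- use assignment true exactly on π-preimage of PS
      set a : V → Bool := fun v => decide (π.symm v ∈ PS) with ha
      have hFSa : FS (a ∘ π) = true := by
        rw [hFS]
        constructor
        · intro v hv
          simp [ha, hv]
        · intro v hv
          have : v ∉ PS := fun hc => (Finset.disjoint_left.mp hS hc) hv
          simp [ha, this]
      have hFUa := (hFU a).mp (hπ a hFSa)
      have hmap : ∀ v ∈ PU, π.symm v ∈ PS := by
        intro v hv
        have := hFUa.1 v hv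
        simpa [ha] using this
      exact Finset.card_le_card_of_injOn (fun v => π.symm v)
        (fun v hv => hmap v hv) (fun x _ y _ h => π.symm.injective h)
    · set a : V → Bool := fun v => !decide (π.symm v ∈ NS) with ha
      have hFSa : FS (a ∘ π) = true := by
        rw [hFS]
        constructor
        · intro v hv
          have : v ∉ NS := fun hc => (Finset.disjoint_left.mp hS hv) hc
          simp [ha, this]
        · intro v hv
          simp [ha, hv]
      have hFUa := (hFU a).mp (hπ a hFSa)
      have hmap : ∀ v ∈ NU, π.symm v ∈ NS := by
        intro v hv
        have := hFUa.2 v hv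
        simpa [ha] using this
      exact Finset.card_le_card_of_injOn (fun v => π.symm v)
        (fun v hv => hmap v hv) (fun x _ y _ h => π.symm.injective h)
  · rintro ⟨hP, hN⟩
    obtain ⟨σ, hσP, hσN⟩ := exists_perm_maps PS NS PU NU hS hU hP hN
    refine ⟨σ.symm, ?_⟩
    intro a hFSa
    rw [hFS] at hFSa
    rw [hFU]
    constructor
    · intro v hv
      have := hFSa.1 (σ v) (hσP v hv)
      simpa using this
    · intro v hv
      have := hFSa.2 (σ v) (hσN v hv)
      simpa using this
end

section
/- Let k ≥ 1 and let C : (Fin k → Bool) → Bool be a constraint that is not equivalent to a constant function and not equivalent to a conjunction of literals, i.e., there do not exist sets P, N ⊆ Fin k such that for all a, C(a) = true iff a(i) = true for every i ∈ P and a(i) = false for every i ∈ N, and C is not constantly true or constantly false. Then over the four-element variable set {f, t, x, y} there exists a finite set S of constraint applications of C (each application given by a map σ : Fin k → {f,t,x,y}, possibly repeating variables, and interpreted as the Boolean function a ↦ C(a ∘ σ)) whose conjunction is equal, as a Boolean function on assignments {f,t,x,y} → Bool, to one of the following ten functions: t ∧ (x ∨ y); ¬f ∧ t ∧ (x ∨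 y); ¬f ∧ (¬x ∨ ¬y); ¬f ∧ t ∧ (¬x ∨ ¬y); (x ↔ y); t ∧ (x ↔ y); ¬f ∧ (x ↔ y); ¬f ∧ t ∧ (x ↔ y); (x ⊕ y); ¬f ∧ t ∧ (x ⊕ y). (Here each variable name stands for its value under the assignment, ↔ denotes equality of Booleans and ⊕ denotes exclusive or.) -/
namespace Stmt16Aux

/-- forcing map: positions in `d` get variable `t = 1`, others get `f = 0`. -/
def sF {k : ℕ} (d : Fin k → Bool) : Fin k → Fin 4 := fun l => if d l then 1 else 0

/-- generic family of vectors: `c1`-positions are `1`, `c2`-positions get `x`,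
`c3`-positions get `y`, rest `0`. -/
def VV {k : ℕ} (c1 c2 c3 : Fin k → Bool) (x y : Bool) : Fin k → Bool :=
  fun l => if c1 l then true else if c2 l then x else if c3 l then y else false

def sA {k : ℕ} (c1 c2 c3 : Fin k → Bool) : Fin k → Fin 4 :=
  fun l => if c1 l then 1 else if c2 l then 2 else if c3 l then 3 else 0

def sB {k : ℕ} (c1 c2 c3 : Fin k → Bool) : Fin k → Fin 4 :=
  fun l => if c1 l then 1 else if c2 l then 3 else if c3 l then 2 else 0

lemma sA_comp {k : ℕ} (c1 c2 c3 : Fin k → Bool) (a : Fin 4 → Bool)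
    (h0 : a 0 = false) (h1 : a 1 = true) :
    a ∘ sA c1 c2 c3 = VV c1 c2 c3 (a 2) (a 3) := by
  funext l
  simp only [Function.comp_apply, sA, VV]
  split_ifs <;> simp [h0, h1]

lemma sB_comp {k : ℕ} (c1 c2 c3 : Fin k → Bool) (a : Fin 4 → Bool)
    (h0 : a 0 = false) (h1 : a 1 = true) :
    a ∘ sB c1 c2 c3 = VV c1 c2 c3 (a 3) (a 2) := by
  funext l
  simp only [Function.comp_apply, sB, VV]
  split_ifs <;> simp [h0, h1]

lemma sF_val {k : ℕ} (C : (Fin k → Bool) → Bool) (d : Fin k → Bool)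
    (h00 : C (fun _ => false) = false) (h11 : C (fun _ => true) = false)
    (hd : C d = true) (hdc : C (fun l => !(d l)) = false)
    (a : Fin 4 → Bool) : C (a ∘ sF d) = (!(a 0) && a 1) := by
  have h : a ∘ sF d = fun l => if d l then a 1 else a 0 := by
    funext l; simp only [Function.comp_apply, sF]; split_ifs <;> rfl
  rw [h]
  cases ha0 : a 0 <;> cases ha1 : a 1
  · rw [show (fun l : Fin k => if d l then false else false) = (fun _ : Fin k => false) from
      funext fun l => by simp]
    simp [h00]
  · rw [show (fun l : Fin k => if d l then true else false) = d from
      funext fun l => by cases h' : d l <;> simp [h']]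
    simp [hd]
  · rw [show (fun l : Fin k => if d l then false else true) = (fun l => !(d l)) from
      funext fun l => by cases h' : d l <;> simp [h']]
    simp [hdc]
  · rw [show (fun l : Fin k => if d l then true else true) = (fun _ : Fin k => true) from
      funext fun l => by simp]
    simp [h11]

lemma aux_exists_true {k : ℕ} (hk : 1 ≤ k) (C : (Fin k → Bool) → Bool)
    (hlit : ¬ ∃ P N : Finset (Fin k), ∀ a : Fin k → Bool,
      (C a = true ↔ ((∀ i ∈ P, a i = true) ∧ (∀ i ∈ N, a i = false)))) :
    ∃ d, C d = true := by
  by_contra h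
  push_neg at h
  refine hlit ⟨{⟨0, hk⟩}, {⟨0, hk⟩}, fun a => ⟨fun hC => absurd hC (h a), ?_⟩⟩
  rintro ⟨h1, h2⟩
  have e1 := h1 _ (Finset.mem_singleton_self _)
  have e2 := h2 _ (Finset.mem_singleton_self _)
  rw [e1] at e2
  exact Bool.noConfusion e2

lemma aux_witness {k : ℕ} (hk : 1 ≤ k) (C : (Fin k → Bool) → Bool)
    (hlit : ¬ ∃ P N : Finset (Fin k), ∀ a : Fin k → Bool,
      (C a = true ↔ ((∀ i ∈ P, a i = true) ∧ (∀ i ∈ N, a i = false)))) :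
    ∃ (a b : Fin k → Bool) (l : Fin k), C a = true ∧ C b = true ∧
      C (Function.update a l (b l)) = false := by
  classical
  by_contra hW
  push_neg at hW
  have hW' : ∀ a b (l : Fin k), C a = true → C b = true →
      C (Function.update a l (b l)) = true := by
    intro a b l ha hb
    cases h : C (Function.update a l (b l)) with
    | false => exact absurd h (hW a b l ha hb)
    | true => rfl
  obtain ⟨r0, hr0⟩ := aux_exists_true hk C hlit
  refine hlit ⟨Finset.univ.filter (fun l => ∀ b, C b = true → b l = true),
    Finset.univ.filter (fun l => ∀ b, C b = true → b l = false), fun a => ⟨?_, ?_⟩⟩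
  · intro hC
    constructor
    · intro i hi
      exact (Finset.mem_filter.mp hi).2 a hC
    · intro i hi
      exact (Finset.mem_filter.mp hi).2 a hC
  · rintro ⟨h1, h2⟩
    have key : ∀ (n : ℕ) (r : Fin k → Bool), C r = true →
        (Finset.univ.filter (fun l => a l ≠ r l)).card ≤ n → C a = true := by
      intro n
      induction n with
      | zero =>
        intro r hr hcard
        have hae : a = r := by
          funext l
          by_contra hne
          have hmem : l ∈ Finset.univ.filter (fun l => a l ≠ r l) := by simp [hne]
          have := Finset.card_pos.mpr ⟨l, hmem⟩
          omega
        rwa [hae]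
      | succ n ih =>
        intro r hr hcard
        rcases Finset.eq_empty_or_nonempty (Finset.univ.filter (fun l => a l ≠ r l)) with
          he | ⟨l, hl⟩
        · have hae : a = r := by
            funext l
            by_contra hne
            have hmem : l ∈ Finset.univ.filter (fun l => a l ≠ r l) := by simp [hne]
            rw [he] at hmem
            exact absurd hmem (Finset.notMem_empty l)
          rwa [hae]
        · have hne : a l ≠ r l := (Finset.mem_filter.mp hl).2
          have hbl : ∃ b, C b = true ∧ b l = a l := by
            cases hal : a l with
            | true =>
              by_cases hlN : ∀ b, C b = true → b l = false
              · have hfa : a l = false :=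
                  h2 l (Finset.mem_filter.mpr ⟨Finset.mem_univ _, hlN⟩)
                rw [hal] at hfa
                exact absurd hfa (by simp)
              · push_neg at hlN
                obtain ⟨b, hb, hbl⟩ := hlN
                refine ⟨b, hb, ?_⟩
                cases hbv : b l with
                | true => rfl
                | false => exact absurd hbv hbl
            | false =>
              by_cases hlP : ∀ b, C b = true → b l = true
              · have hfa : a l = true :=
                  h1 l (Finset.mem_filter.mpr ⟨Finset.mem_univ _, hlP⟩)
                rw [hal] at hfa
                exact absurd hfa (by simp)
              · push_neg at hlP
                obtain ⟨b, hb, hbl⟩ := hlP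
                refine ⟨b, hb, ?_⟩
                cases hbv : b l with
                | false => rfl
                | true => exact absurd hbv hbl
          obtain ⟨b, hb, hbla⟩ := hbl
          have hr' : C (Function.update r l (b l)) = true := hW' r b l hr hb
          apply ih (Function.update r l (b l)) hr'
          have hsub : (Finset.univ.filter (fun l' => a l' ≠ Function.update r l (b l) l')) ⊆
              (Finset.univ.filter (fun l' => a l' ≠ r l')).erase l := by
            intro x hx
            have hx' : a x ≠ Function.update r l (b l) x :=
              (Finset.mem_filter.mp hx).2
            rcases eq_or_ne x l with rfl | hxl
            · exact (hx' (by rw [Function.update_self, hbla])).elim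
            · refine Finset.mem_erase.mpr ⟨hxl, ?_⟩
              refine Finset.mem_filter.mpr ⟨Finset.mem_univ _, ?_⟩
              rwa [Function.update_of_ne hxl] at hx'
          have hc1 := Finset.card_le_card hsub
          have hc2 := Finset.card_erase_of_mem hl
          have hc3 := Finset.card_pos.mpr ⟨l, hl⟩
          omega
    exact key _ r0 hr0 le_rfl

end Stmt16Aux

namespace Stmt16Aux2
open Stmt16Aux

lemma aux_interval {k : ℕ} (C : (Fin k → Bool) → Bool) :
    ∀ (n : ℕ) (m c j : Fin k → Bool),
      (Finset.univ.filter (fun l => m l ≠ c l)).card ≤ n →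
      (∀ l, m l = true → c l = true) → (∀ l, c l = true → j l = true) →
      C m = true → C j = true → C c = false →
      ∃ (m' j' : Fin k → Bool) (i : Fin k), C m' = true ∧ C j' = true ∧
        (∀ l, m' l = true → j' l = true) ∧ m' i = false ∧ j' i = true ∧
        C (Function.update m' i true) = false := by
  classical
  intro n
  induction n with
  | zero =>
    intro m c j hcard hmc hcj hm hj hc
    exfalso
    have hmceq : m = c := by
      funext l
      by_contra hne
      have hmem : l ∈ Finset.univ.filter (fun l => m l ≠ c l) := by simp [hne]
      have := Finset.card_pos.mpr ⟨l, hmem⟩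
      omega
    rw [hmceq, hc] at hm
    exact Bool.noConfusion hm
  | succ n ih =>
    intro m c j hcard hmc hcj hm hj hc
    have hne : m ≠ c := by
      intro h
      rw [h, hc] at hm
      exact Bool.noConfusion hm
    obtain ⟨l, hl⟩ := Function.ne_iff.mp hne
    have hml : m l = false := by
      cases h : m l with
      | false => rfl
      | true => exact absurd (hmc l h) (fun hcl => hl (by rw [h, hcl]))
    have hcl : c l = true := by
      cases h : c l with
      | true => rfl
      | false => exact (hl (by rw [hml, h])).elim
    by_cases hsingle : ∀ l', m l' ≠ c l' → l' = l
    · have hceq : c = Function.update m l true := by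
        funext l'
        rcases eq_or_ne l' l with rfl | hne'
        · rw [Function.update_self, hcl]
        · rw [Function.update_of_ne hne']
          by_contra hne''
          exact hne' (hsingle l' (fun h => hne'' h.symm))
      exact ⟨m, j, l, hm, hj, fun l'' h => hcj l'' (hmc l'' h), hml, hcj l hcl,
        by rw [← hceq]; exact hc⟩
    · push_neg at hsingle
      obtain ⟨l₂, hl₂ne, hl₂⟩ := hsingle
      have hc'c : ∀ l', Function.update c l false l' = true → c l' = true := by
        intro l' h
        rcases eq_or_ne l' l with rfl | hne'
        · rw [Function.update_self] at h
          exact Bool.noConfusion h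
        · rwa [Function.update_of_ne hne'] at h
      have hmc' : ∀ l', m l' = true → Function.update c l false l' = true := by
        intro l' h
        rcases eq_or_ne l' l with rfl | hne'
        · rw [hml] at h
          exact Bool.noConfusion h
        · rw [Function.update_of_ne hne']
          exact hmc l' h
      have hc'j : ∀ l', Function.update c l false l' = true → j l' = true :=
        fun l' h => hcj l' (hc'c l' h)
      have hlmem : l ∈ Finset.univ.filter (fun l' => m l' ≠ c l') := by simp [hl]
      have hl2mem : l₂ ∈ Finset.univ.filter (fun l' => m l' ≠ c l') := by simp [hl₂ne]
      have h2card : 2 ≤ (Finset.univ.filter (fun l' => m l' ≠ c l')).card := by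
        have hsub : ({l₂, l} : Finset (Fin k)) ⊆
            Finset.univ.filter (fun l' => m l' ≠ c l') := by
          intro x hx
          rcases Finset.mem_insert.mp hx with rfl | hx'
          · exact hl2mem
          · rw [Finset.mem_singleton.mp hx']
            exact hlmem
        have := Finset.card_le_card hsub
        rwa [Finset.card_pair hl₂] at this
      cases hcc' : C (Function.update c l false) with
      | true =>
        apply ih (Function.update c l false) c j ?_ hc'c hcj hcc' hj hc
        have hsub : (Finset.univ.filter
            (fun l' => Function.update c l false l' ≠ c l')) ⊆ {l} := by
          intro x hx
          have hx' := (Finset.mem_filter.mp hx).2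
          rcases eq_or_ne x l with rfl | hxl
          · exact Finset.mem_singleton_self _
          · rw [Function.update_of_ne hxl] at hx'
            exact absurd rfl hx'
        have := Finset.card_le_card hsub
        rw [Finset.card_singleton] at this
        omega
      | false =>
        apply ih m (Function.update c l false) j ?_ hmc' hc'j hm hj hcc'
        have hsub : (Finset.univ.filter
            (fun l' => m l' ≠ Function.update c l false l')) ⊆
            (Finset.univ.filter (fun l' => m l' ≠ c l')).erase l := by
          intro x hx
          have hx' := (Finset.mem_filter.mp hx).2
          rcases eq_or_ne x l with rfl | hxl
          · rw [Function.update_self, hml] at hx'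
            exact absurd rfl hx'
          · refine Finset.mem_erase.mpr ⟨hxl, ?_⟩
            refine Finset.mem_filter.mpr ⟨Finset.mem_univ _, ?_⟩
            rwa [Function.update_of_ne hxl] at hx'
        have hc1 := Finset.card_le_card hsub
        have hc2 := Finset.card_erase_of_mem hlmem
        omega

end Stmt16Aux2

namespace Stmt16Aux3
open Stmt16Aux

lemma helper_B_OR {k : ℕ} (C : (Fin k → Bool) → Bool) (d c1 c2 c3 : Fin k → Bool)
    (h00 : C (fun _ => false) = false) (h11 : C (fun _ => true) = false)
    (hd : C d = true) (hdc : C (fun l => !(d l)) = false)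
    (hV00 : C (VV c1 c2 c3 false false) = false)
    (hV01 : C (VV c1 c2 c3 false true) = true)
    (hV10 : C (VV c1 c2 c3 true false) = true)
    (hV11 : C (VV c1 c2 c3 true true) = true) :
    ∀ a : Fin 4 → Bool,
      (∀ σ ∈ ({sF d, sA c1 c2 c3, sB c1 c2 c3} : Finset (Fin k → Fin 4)),
        C (a ∘ σ) = true)
        ↔ (!a 0 && a 1 && (a 2 || a 3)) = true := by
  classical
  intro a
  have hF : C (a ∘ sF d) = (!(a 0) && a 1) := sF_val C d h00 h11 hd hdc a
  simp only [Finset.forall_mem_insert, Finset.mem_singleton, forall_eq]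
  cases ha0 : a 0 <;> cases ha1 : a 1 <;> simp only [ha0, ha1] at hF
  · simp [hF]
  · rw [sA_comp c1 c2 c3 a ha0 ha1, sB_comp c1 c2 c3 a ha0 ha1]
    cases ha2 : a 2 <;> cases ha3 : a 3 <;>
      simp [hF, hV00, hV01, hV10, hV11]
  · simp [hF]
  · simp [hF]

lemma helper_B_NAND {k : ℕ} (C : (Fin k → Bool) → Bool) (d c1 c2 c3 : Fin k → Bool)
    (h00 : C (fun _ => false) = false) (h11 : C (fun _ => true) = false)
    (hd : C d = true) (hdc : C (fun l => !(d l)) = false)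
    (hV00 : C (VV c1 c2 c3 false false) = true)
    (hV01 : C (VV c1 c2 c3 false true) = true)
    (hV10 : C (VV c1 c2 c3 true false) = true)
    (hV11 : C (VV c1 c2 c3 true true) = false) :
    ∀ a : Fin 4 → Bool,
      (∀ σ ∈ ({sF d, sA c1 c2 c3, sB c1 c2 c3} : Finset (Fin k → Fin 4)),
        C (a ∘ σ) = true)
        ↔ (!a 0 && a 1 && (!a 2 || !a 3)) = true := by
  classical
  intro a
  have hF : C (a ∘ sF d) = (!(a 0) && a 1) := sF_val C d h00 h11 hd hdc a
  simp only [Finset.forall_mem_insert, Finset.mem_singleton, forall_eq]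
  cases ha0 : a 0 <;> cases ha1 : a 1 <;> simp only [ha0, ha1] at hF
  · simp [hF]
  · rw [sA_comp c1 c2 c3 a ha0 ha1, sB_comp c1 c2 c3 a ha0 ha1]
    cases ha2 : a 2 <;> cases ha3 : a 3 <;>
      simp [hF, hV00, hV01, hV10, hV11]
  · simp [hF]
  · simp [hF]


lemma helper_B_XOR {k : ℕ} (C : (Fin k → Bool) → Bool) (d c1 c2 c3 : Fin k → Bool)
    (h00 : C (fun _ => false) = false) (h11 : C (fun _ => true) = false)
    (hd : C d = true) (hdc : C (fun l => !(d l)) = false)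
    (hV00 : C (VV c1 c2 c3 false false) = false)
    (hV01 : C (VV c1 c2 c3 false true) = true)
    (hV10 : C (VV c1 c2 c3 true false) = true)
    (hV11 : C (VV c1 c2 c3 true true) = false) :
    ∀ a : Fin 4 → Bool,
      (∀ σ ∈ ({sF d, sA c1 c2 c3, sB c1 c2 c3} : Finset (Fin k → Fin 4)),
        C (a ∘ σ) = true)
        ↔ (!a 0 && a 1 && (a 2 != a 3)) = true := by
  classical
  intro a
  have hF : C (a ∘ sF d) = (!(a 0) && a 1) := sF_val C d h00 h11 hd hdc a
  simp only [Finset.forall_mem_insert, Finset.mem_singleton, forall_eq]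
  cases ha0 : a 0 <;> cases ha1 : a 1 <;> simp only [ha0, ha1] at hF
  · simp [hF]
  · rw [sA_comp c1 c2 c3 a ha0 ha1, sB_comp c1 c2 c3 a ha0 ha1]
    cases ha2 : a 2 <;> cases ha3 : a 3 <;>
      simp [hF, hV00, hV01, hV10, hV11]
  · simp [hF]
  · simp [hF]


lemma helper_B_EQ {k : ℕ} (C : (Fin k → Bool) → Bool) (d c1 c2 c3 : Fin k → Bool)
    (h00 : C (fun _ => false) = false) (h11 : C (fun _ => true) = false)
    (hd : C d = true) (hdc : C (fun l => !(d l)) = false)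
    (hV00 : C (VV c1 c2 c3 false false) = true)
    (hV10 : C (VV c1 c2 c3 true false) = false)
    (hV11 : C (VV c1 c2 c3 true true) = true) :
    ∀ a : Fin 4 → Bool,
      (∀ σ ∈ ({sF d, sA c1 c2 c3, sB c1 c2 c3} : Finset (Fin k → Fin 4)),
        C (a ∘ σ) = true)
        ↔ (!a 0 && a 1 && (a 2 == a 3)) = true := by
  classical
  intro a
  have hF : C (a ∘ sF d) = (!(a 0) && a 1) := sF_val C d h00 h11 hd hdc a
  simp only [Finset.forall_mem_insert, Finset.mem_singleton, forall_eq]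
  cases ha0 : a 0 <;> cases ha1 : a 1 <;> simp only [ha0, ha1] at hF
  · simp [hF]
  · rw [sA_comp c1 c2 c3 a ha0 ha1, sB_comp c1 c2 c3 a ha0 ha1]
    cases ha2 : a 2 <;> cases ha3 : a 3 <;>
      simp [hF, hV00, hV10, hV11]
  · simp [hF]
  · simp [hF]


end Stmt16Aux3

namespace Stmt16Aux4
open Stmt16Aux

def eA {k : ℕ} (d : Fin k → Bool) : Fin k → Fin 4 := fun l => if d l then 2 else 3
def eB {k : ℕ} (d : Fin k → Bool) : Fin k → Fin 4 := fun l => if d l then 3 else 2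
def EV {k : ℕ} (d : Fin k → Bool) (x y : Bool) : Fin k → Bool := fun l => if d l then x else y

lemma eA_comp {k : ℕ} (d : Fin k → Bool) (a : Fin 4 → Bool) :
    a ∘ eA d = EV d (a 2) (a 3) := by
  funext l; simp only [Function.comp_apply, eA, EV]; split_ifs <;> rfl

lemma eB_comp {k : ℕ} (d : Fin k → Bool) (a : Fin 4 → Bool) :
    a ∘ eB d = EV d (a 3) (a 2) := by
  funext l; simp only [Function.comp_apply, eB, EV]; split_ifs <;> rfl

lemma EV_ff {k : ℕ} (d : Fin k → Bool) : EV d false false = (fun _ => false) := by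
  funext l; simp [EV]
lemma EV_tt {k : ℕ} (d : Fin k → Bool) : EV d true true = (fun _ => true) := by
  funext l; simp [EV]
lemma EV_tf {k : ℕ} (d : Fin k → Bool) : EV d true false = d := by
  funext l; cases h : d l <;> simp [EV, h]
lemma EV_ft {k : ℕ} (d : Fin k → Bool) : EV d false true = (fun l => !(d l)) := by
  funext l; cases h : d l <;> simp [EV, h]

lemma helper_A {k : ℕ} (C : (Fin k → Bool) → Bool) (d : Fin k → Bool)
    (hC0 : C (fun _ => false) = true) (hC1 : C (fun _ => true) = true)
    (hd : C d = false) :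
    ∀ a : Fin 4 → Bool,
      (∀ σ ∈ ({eA d, eB d} : Finset (Fin k → Fin 4)), C (a ∘ σ) = true)
        ↔ (a 2 == a 3) = true := by
  classical
  intro a
  simp only [Finset.forall_mem_insert, Finset.mem_singleton, forall_eq]
  rw [eA_comp d a, eB_comp d a]
  cases ha2 : a 2 <;> cases ha3 : a 3 <;>
    simp [EV_ff, EV_tt, EV_tf, hC0, hC1, hd]

lemma helper_B2 {k : ℕ} (C : (Fin k → Bool) → Bool) (d : Fin k → Bool)
    (hC0 : C (fun _ => false) = false) (hC1 : C (fun _ => true) = false)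
    (hd : C d = true) (hdn : C (fun l => !(d l)) = true) :
    ∀ a : Fin 4 → Bool,
      (∀ σ ∈ ({eA d} : Finset (Fin k → Fin 4)), C (a ∘ σ) = true)
        ↔ (a 2 != a 3) = true := by
  classical
  intro a
  simp only [Finset.mem_singleton, forall_eq]
  rw [eA_comp d a]
  cases ha2 : a 2 <;> cases ha3 : a 3 <;>
    simp [EV_ff, EV_tt, EV_tf, EV_ft, hC0, hC1, hd, hdn]

def tA {k : ℕ} (s p : Fin k → Bool) : Fin k → Fin 4 :=
  fun l => if s l then 1 else if p l then 2 else 3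
def tB {k : ℕ} (s p : Fin k → Bool) : Fin k → Fin 4 :=
  fun l => if s l then 1 else if p l then 3 else 2
def WV {k : ℕ} (s p : Fin k → Bool) (x y : Bool) : Fin k → Bool :=
  fun l => if s l then true else if p l then x else y

lemma tA_comp {k : ℕ} (s p : Fin k → Bool) (a : Fin 4 → Bool) (h1 : a 1 = true) :
    a ∘ tA s p = WV s p (a 2) (a 3) := by
  funext l; simp only [Function.comp_apply, tA, WV]; split_ifs <;> simp [h1]

lemma tB_comp {k : ℕ} (s p : Fin k → Bool) (a : Fin 4 → Bool) (h1 : a 1 = true) :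
    a ∘ tB s p = WV s p (a 3) (a 2) := by
  funext l; simp only [Function.comp_apply, tB, WV]; split_ifs <;> simp [h1]

lemma helper_C_EQ {k : ℕ} (C : (Fin k → Bool) → Bool) (s p : Fin k → Bool)
    (hC0 : C (fun _ => false) = false) (hC1 : C (fun _ => true) = true)
    (hW00 : C (WV s p false false) = true)
    (hW10 : C (WV s p true false) = false)
    (hW11 : C (WV s p true true) = true) :
    ∀ a : Fin 4 → Bool,
      (∀ σ ∈ ({(fun _ => 1), tA s p, tB s p} : Finset (Fin k → Fin 4)),
        C (a ∘ σ) = true)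
        ↔ (a 1 && (a 2 == a 3)) = true := by
  classical
  intro a
  have hT : C (a ∘ (fun _ : Fin k => (1 : Fin 4))) = a 1 := by
    have he : a ∘ (fun _ : Fin k => (1 : Fin 4)) = (fun _ : Fin k => a 1) := rfl
    rw [he]
    cases ha1 : a 1
    · exact hC0
    · exact hC1
  simp only [Finset.forall_mem_insert, Finset.mem_singleton, forall_eq]
  cases ha1 : a 1 <;> simp only [ha1] at hT
  · simp [hT]
  · rw [tA_comp s p a ha1, tB_comp s p a ha1]
    cases ha2 : a 2 <;> cases ha3 : a 3 <;>
      simp [hT, hW00, hW10, hW11]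

lemma helper_C_OR {k : ℕ} (C : (Fin k → Bool) → Bool) (s p : Fin k → Bool)
    (hC0 : C (fun _ => false) = false) (hC1 : C (fun _ => true) = true)
    (hW00 : C (WV s p false false) = false)
    (hW01 : C (WV s p false true) = true)
    (hW10 : C (WV s p true false) = true)
    (hW11 : C (WV s p true true) = true) :
    ∀ a : Fin 4 → Bool,
      (∀ σ ∈ ({(fun _ => 1), tA s p, tB s p} : Finset (Fin k → Fin 4)),
        C (a ∘ σ) = true)
        ↔ (a 1 && (a 2 || a 3)) = true := by
  classical
  intro a
  have hT : C (a ∘ (fun _ : Fin k => (1 : Fin 4))) = a 1 := by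
    have he : a ∘ (fun _ : Fin k => (1 : Fin 4)) = (fun _ : Fin k => a 1) := rfl
    rw [he]
    cases ha1 : a 1
    · exact hC0
    · exact hC1
  simp only [Finset.forall_mem_insert, Finset.mem_singleton, forall_eq]
  cases ha1 : a 1 <;> simp only [ha1] at hT
  · simp [hT]
  · rw [tA_comp s p a ha1, tB_comp s p a ha1]
    cases ha2 : a 2 <;> cases ha3 : a 3 <;>
      simp [hT, hW00, hW01, hW10, hW11]

def dA {k : ℕ} (p s : Fin k → Bool) : Fin k → Fin 4 :=
  fun l => if p l then 2 else if s l then 3 else 0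
def dB {k : ℕ} (p s : Fin k → Bool) : Fin k → Fin 4 :=
  fun l => if p l then 3 else if s l then 2 else 0
def DV {k : ℕ} (p s : Fin k → Bool) (x y : Bool) : Fin k → Bool :=
  fun l => if p l then x else if s l then y else false

lemma dA_comp {k : ℕ} (p s : Fin k → Bool) (a : Fin 4 → Bool) (h0 : a 0 = false) :
    a ∘ dA p s = DV p s (a 2) (a 3) := by
  funext l; simp only [Function.comp_apply, dA, DV]; split_ifs <;> simp [h0]

lemma dB_comp {k : ℕ} (p s : Fin k → Bool) (a : Fin 4 → Bool) (h0 : a 0 = false) :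
    a ∘ dB p s = DV p s (a 3) (a 2) := by
  funext l; simp only [Function.comp_apply, dB, DV]; split_ifs <;> simp [h0]

lemma helper_D_EQ {k : ℕ} (C : (Fin k → Bool) → Bool) (p s : Fin k → Bool)
    (hC0 : C (fun _ => false) = true) (hC1 : C (fun _ => true) = false)
    (hD00 : C (DV p s false false) = true)
    (hD10 : C (DV p s true false) = false)
    (hD11 : C (DV p s true true) = true) :
    ∀ a : Fin 4 → Bool,
      (∀ σ ∈ ({(fun _ => 0), dA p s, dB p s} : Finset (Fin k → Fin 4)),
        C (a ∘ σ) = true)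
        ↔ (!a 0 && (a 2 == a 3)) = true := by
  classical
  intro a
  have hT : C (a ∘ (fun _ : Fin k => (0 : Fin 4))) = !(a 0) := by
    have he : a ∘ (fun _ : Fin k => (0 : Fin 4)) = (fun _ : Fin k => a 0) := rfl
    rw [he]
    cases ha0 : a 0
    · exact hC0
    · exact hC1
  simp only [Finset.forall_mem_insert, Finset.mem_singleton, forall_eq]
  cases ha0 : a 0 <;> simp only [ha0] at hT
  · rw [dA_comp p s a ha0, dB_comp p s a ha0]
    cases ha2 : a 2 <;> cases ha3 : a 3 <;>
      simp [hT, hD00, hD10, hD11]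
  · simp [hT]

lemma helper_D_NAND {k : ℕ} (C : (Fin k → Bool) → Bool) (p s : Fin k → Bool)
    (hC0 : C (fun _ => false) = true) (hC1 : C (fun _ => true) = false)
    (hD00 : C (DV p s false false) = true)
    (hD01 : C (DV p s false true) = true)
    (hD10 : C (DV p s true false) = true)
    (hD11 : C (DV p s true true) = false) :
    ∀ a : Fin 4 → Bool,
      (∀ σ ∈ ({(fun _ => 0), dA p s, dB p s} : Finset (Fin k → Fin 4)),
        C (a ∘ σ) = true)
        ↔ (!a 0 && (!a 2 || !a 3)) = true := by
  classical
  intro a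
  have hT : C (a ∘ (fun _ : Fin k => (0 : Fin 4))) = !(a 0) := by
    have he : a ∘ (fun _ : Fin k => (0 : Fin 4)) = (fun _ : Fin k => a 0) := rfl
    rw [he]
    cases ha0 : a 0
    · exact hC0
    · exact hC1
  simp only [Finset.forall_mem_insert, Finset.mem_singleton, forall_eq]
  cases ha0 : a 0 <;> simp only [ha0] at hT
  · rw [dA_comp p s a ha0, dB_comp p s a ha0]
    cases ha2 : a 2 <;> cases ha3 : a 3 <;>
      simp [hT, hD00, hD01, hD10, hD11]
  · simp [hT]

end Stmt16Aux4

/-- If a constraint `C` of arity `k ≥ 1` is not constantly true, not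
constantly false, and not expressible as a conjunction of literals, then there is a
finite set `S` of constraint applications of `C` over the four variables
`{f, t, x, y}` (modeled as `0, 1, 2, 3 : Fin 4`) whose conjunction equals one of the
ten listed Boolean functions. -/
theorem stmt_16 (k : ℕ) (hk : 1 ≤ k) (C : (Fin k → Bool) → Bool)
    (hlit : ¬ ∃ P N : Finset (Fin k), ∀ a : Fin k → Bool,
      (C a = true ↔ ((∀ i ∈ P, a i = true) ∧ (∀ i ∈ N, a i = false))))
    (htrue : ¬ ∀ a : Fin k → Bool, C a = true)
    (hfalse : ¬ ∀ a : Fin k → Bool, C a = false) :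
    ∃ S : Finset (Fin k → Fin 4),
      ∃ φ ∈ [
        (fun a : Fin 4 → Bool => a 1 && (a 2 || a 3)),
        (fun a : Fin 4 → Bool => !a 0 && a 1 && (a 2 || a 3)),
        (fun a : Fin 4 → Bool => !a 0 && (!a 2 || !a 3)),
        (fun a : Fin 4 → Bool => !a 0 && a 1 && (!a 2 || !a 3)),
        (fun a : Fin 4 → Bool => a 2 == a 3),
        (fun a : Fin 4 → Bool => a 1 && (a 2 == a 3)),
        (fun a : Fin 4 → Bool => !a 0 && (a 2 == a 3)),
        (fun a : Fin 4 → Bool => !a 0 && a 1 && (a 2 == a 3)),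
        (fun a : Fin 4 → Bool => a 2 != a 3),
        (fun a : Fin 4 → Bool => !a 0 && a 1 && (a 2 != a 3))],
      ∀ a : Fin 4 → Bool, ((∀ σ ∈ S, C (a ∘ σ) = true) ↔ φ a = true) := by
  classical
  have hsat : ∃ d, C d = true := Stmt16Aux.aux_exists_true hk C hlit
  obtain ⟨w1, w2, l₀, hw1, hw2, hwc⟩ := Stmt16Aux.aux_witness hk C hlit
  have hne0 : w2 l₀ ≠ w1 l₀ := by
    intro h
    rw [h, Function.update_eq_self] at hwc
    rw [hwc] at hw1
    exact Bool.noConfusion hw1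
  cases h0 : C (fun _ => false) <;> cases h1 : C (fun _ => true)
  · -- Case B : C0 = false, C1 = false
    by_cases hB : ∃ d, C d = true ∧ C (fun l => !(d l)) = false
    · obtain ⟨d, hd, hdc⟩ := hB
      by_cases hmeet : ∃ u v, C u = true ∧ C v = true ∧ C (fun l => u l && v l) = false
      · obtain ⟨u, v, hu, hv, huv⟩ := hmeet
        have e00 : Stmt16Aux.VV (fun l => u l && v l) (fun l => !(u l) && v l)
            (fun l => u l && !(v l)) false false = (fun l => u l && v l) := by
          funext l; simp only [Stmt16Aux.VV]
          rcases Bool.eq_false_or_eq_true (u l) with hu' | hu' <;>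
            rcases Bool.eq_false_or_eq_true (v l) with hv' | hv' <;> simp [hu', hv']
        have e01 : Stmt16Aux.VV (fun l => u l && v l) (fun l => !(u l) && v l)
            (fun l => u l && !(v l)) false true = u := by
          funext l; simp only [Stmt16Aux.VV]
          rcases Bool.eq_false_or_eq_true (u l) with hu' | hu' <;>
            rcases Bool.eq_false_or_eq_true (v l) with hv' | hv' <;> simp [hu', hv']
        have e10 : Stmt16Aux.VV (fun l => u l && v l) (fun l => !(u l) && v l)
            (fun l => u l && !(v l)) true false = v := by
          funext l; simp only [Stmt16Aux.VV]
          rcases Bool.eq_false_or_eq_true (u l) with hu' | hu' <;>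
            rcases Bool.eq_false_or_eq_true (v l) with hv' | hv' <;> simp [hu', hv']
        have e11 : Stmt16Aux.VV (fun l => u l && v l) (fun l => !(u l) && v l)
            (fun l => u l && !(v l)) true true = (fun l => u l || v l) := by
          funext l; simp only [Stmt16Aux.VV]
          rcases Bool.eq_false_or_eq_true (u l) with hu' | hu' <;>
            rcases Bool.eq_false_or_eq_true (v l) with hv' | hv' <;> simp [hu', hv']
        cases hjv : C (fun l => u l || v l) with
        | false =>
          exact ⟨_, fun a : Fin 4 → Bool => !a 0 && a 1 && (a 2 != a 3), by simp,
            Stmt16Aux3.helper_B_XOR C d _ _ _ h0 h1 hd hdc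
              (by rw [e00]; exact huv) (by rw [e01]; exact hu)
              (by rw [e10]; exact hv) (by rw [e11]; exact hjv)⟩
        | true =>
          exact ⟨_, fun a : Fin 4 → Bool => !a 0 && a 1 && (a 2 || a 3), by simp,
            Stmt16Aux3.helper_B_OR C d _ _ _ h0 h1 hd hdc
              (by rw [e00]; exact huv) (by rw [e01]; exact hu)
              (by rw [e10]; exact hv) (by rw [e11]; exact hjv)⟩
      · push_neg at hmeet
        have hmeet' : ∀ u v, C u = true → C v = true →
            C (fun l => u l && v l) = true := by
          intro u v hu hv
          cases h : C (fun l => u l && v l)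
          · exact absurd h (hmeet u v hu hv)
          · rfl
        by_cases hjoin : ∃ u v, C u = true ∧ C v = true ∧
            C (fun l => u l || v l) = false
        · obtain ⟨u, v, hu, hv, hjv⟩ := hjoin
          have e00 : Stmt16Aux.VV (fun l => u l && v l) (fun l => !(u l) && v l)
              (fun l => u l && !(v l)) false false = (fun l => u l && v l) := by
            funext l; simp only [Stmt16Aux.VV]
            rcases Bool.eq_false_or_eq_true (u l) with hu' | hu' <;>
            rcases Bool.eq_false_or_eq_true (v l) with hv' | hv' <;> simp [hu', hv']
          have e01 : Stmt16Aux.VV (fun l => u l && v l) (fun l => !(u l) && v l)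
              (fun l => u l && !(v l)) false true = u := by
            funext l; simp only [Stmt16Aux.VV]
            rcases Bool.eq_false_or_eq_true (u l) with hu' | hu' <;>
            rcases Bool.eq_false_or_eq_true (v l) with hv' | hv' <;> simp [hu', hv']
          have e10 : Stmt16Aux.VV (fun l => u l && v l) (fun l => !(u l) && v l)
              (fun l => u l && !(v l)) true false = v := by
            funext l; simp only [Stmt16Aux.VV]
            rcases Bool.eq_false_or_eq_true (u l) with hu' | hu' <;>
            rcases Bool.eq_false_or_eq_true (v l) with hv' | hv' <;> simp [hu', hv']
          have e11 : Stmt16Aux.VV (fun l => u l && v l) (fun l => !(u l) && v l)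
              (fun l => u l && !(v l)) true true = (fun l => u l || v l) := by
            funext l; simp only [Stmt16Aux.VV]
            rcases Bool.eq_false_or_eq_true (u l) with hu' | hu' <;>
            rcases Bool.eq_false_or_eq_true (v l) with hv' | hv' <;> simp [hu', hv']
          exact ⟨_, fun a : Fin 4 → Bool => !a 0 && a 1 && (!a 2 || !a 3), by simp,
            Stmt16Aux3.helper_B_NAND C d _ _ _ h0 h1 hd hdc
              (by rw [e00]; exact hmeet' u v hu hv) (by rw [e01]; exact hu)
              (by rw [e10]; exact hv) (by rw [e11]; exact hjv)⟩
        · push_neg at hjoin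
          have hjoin' : ∀ u v, C u = true → C v = true →
              C (fun l => u l || v l) = true := by
            intro u v hu hv
            cases h : C (fun l => u l || v l)
            · exact absurd h (hjoin u v hu hv)
            · rfl
          have hm : C (fun l => w1 l && w2 l) = true := hmeet' w1 w2 hw1 hw2
          have hj : C (fun l => w1 l || w2 l) = true := hjoin' w1 w2 hw1 hw2
          have hmc : ∀ l, (w1 l && w2 l) = true →
              Function.update w1 l₀ (w2 l₀) l = true := by
            intro l hl
            rcases eq_or_ne l l₀ with rfl | hne
            · rw [Function.update_self]
              exact (Bool.and_eq_true_iff.mp hl).2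
            · rw [Function.update_of_ne hne]
              exact (Bool.and_eq_true_iff.mp hl).1
          have hcj : ∀ l, Function.update w1 l₀ (w2 l₀) l = true →
              (w1 l || w2 l) = true := by
            intro l hl
            rcases eq_or_ne l l₀ with rfl | hne
            · rw [Function.update_self] at hl
              simp [hl]
            · rw [Function.update_of_ne hne] at hl
              simp [hl]
          obtain ⟨m', j', i, hm', hj', hord, hmi, hji, hupd⟩ :=
            Stmt16Aux2.aux_interval C
              ((Finset.univ.filter (fun l => (w1 l && w2 l) ≠
                Function.update w1 l₀ (w2 l₀) l)).card)
              (fun l => w1 l && w2 l) (Function.update w1 l₀ (w2 l₀))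
              (fun l => w1 l || w2 l) le_rfl hmc hcj hm hj hwc
          have eE00 : Stmt16Aux.VV m' (fun l => decide (l = i)) j' false false = m' := by
            funext l; simp only [Stmt16Aux.VV]
            rcases eq_or_ne l i with rfl | hne
            · simp [hmi]
            · cases hm'' : m' l <;> simp [hne, hm'']
          have eE10 : Stmt16Aux.VV m' (fun l => decide (l = i)) j' true false =
              Function.update m' i true := by
            funext l; simp only [Stmt16Aux.VV]
            rcases eq_or_ne l i with rfl | hne
            · rw [Function.update_self]
              simp [hmi]
            · rw [Function.update_of_ne hne]
              cases hm'' : m' l <;> simp [hne, hm'']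
          have eE11 : Stmt16Aux.VV m' (fun l => decide (l = i)) j' true true = j' := by
            funext l; simp only [Stmt16Aux.VV]
            rcases eq_or_ne l i with rfl | hne
            · simp [hmi, hji]
            · cases hm'' : m' l
              · cases hj'' : j' l <;> simp [hne, hm'', hj'']
              · simp [hne, hm'', hord l hm'']
          exact ⟨_, fun a : Fin 4 → Bool => !a 0 && a 1 && (a 2 == a 3), by simp,
            Stmt16Aux3.helper_B_EQ C d m' (fun l => decide (l = i)) j' h0 h1 hd hdc
              (by rw [eE00]; exact hm') (by rw [eE10]; exact hupd)
              (by rw [eE11]; exact hj')⟩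
    · push_neg at hB
      obtain ⟨d, hd⟩ := hsat
      have hdn : C (fun l => !(d l)) = true := by
        cases h : C (fun l => !(d l))
        · exact absurd h (hB d hd)
        · rfl
      exact ⟨_, fun a : Fin 4 → Bool => a 2 != a 3, by simp,
        Stmt16Aux4.helper_B2 C d h0 h1 hd hdn⟩
  · -- Case C : C0 = false, C1 = true
    by_cases hup : ∃ s t, C s = true ∧ (∀ l, s l = true → t l = true) ∧ C t = false
    · obtain ⟨s, p, hs, hsp, hp⟩ := hup
      have eW00 : Stmt16Aux4.WV s p false false = s := by
        funext l; simp only [Stmt16Aux4.WV]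
        cases hs' : s l <;> simp
      have eW10 : Stmt16Aux4.WV s p true false = p := by
        funext l; simp only [Stmt16Aux4.WV]
        cases hp' : p l
        · cases hs' : s l
          · simp
          · exact absurd (hsp l hs') (by simp [hp'])
        · cases hs' : s l <;> simp
      have eW11 : Stmt16Aux4.WV s p true true = (fun _ => true) := by
        funext l; simp only [Stmt16Aux4.WV]
        cases hs' : s l <;> simp
      exact ⟨_, fun a : Fin 4 → Bool => a 1 && (a 2 == a 3), by simp,
        Stmt16Aux4.helper_C_EQ C s p h0 h1 (by rw [eW00]; exact hs)
          (by rw [eW10]; exact hp) (by rw [eW11]; exact h1)⟩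
    · push_neg at hup
      have hup' : ∀ s t, C s = true → (∀ l, s l = true → t l = true) →
          C t = true := by
        intro s t hs hst
        cases h : C t
        · exact absurd h (hup s t hs hst)
        · rfl
      cases hal : w1 l₀ with
      | false =>
        exfalso
        have hbl : w2 l₀ = true := by
          cases h : w2 l₀
          · exact absurd (by rw [h, hal]) hne0
          · rfl
        have hcc : C (Function.update w1 l₀ (w2 l₀)) = true := by
          apply hup' w1 _ hw1
          intro l hl
          rcases eq_or_ne l l₀ with rfl | hne
          · rw [Function.update_self, hbl]
          · rwa [Function.update_of_ne hne]
        rw [hcc] at hwc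
        exact Bool.noConfusion hwc
      | true =>
        have hmf : C (fun l => w1 l && w2 l) = false := by
          cases h : C (fun l => w1 l && w2 l)
          · rfl
          · exfalso
            have hcc : C (Function.update w1 l₀ (w2 l₀)) = true := by
              apply hup' (fun l => w1 l && w2 l) _ h
              intro l hl
              rcases eq_or_ne l l₀ with rfl | hne
              · rw [Function.update_self]
                exact (Bool.and_eq_true_iff.mp hl).2
              · rw [Function.update_of_ne hne]
                exact (Bool.and_eq_true_iff.mp hl).1
            rw [hcc] at hwc
            exact Bool.noConfusion hwc
        have eQ00 : Stmt16Aux4.WV (fun l => w1 l && w2 l) (fun l => !(w2 l))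
            false false = (fun l => w1 l && w2 l) := by
          funext l; simp only [Stmt16Aux4.WV]
          rcases Bool.eq_false_or_eq_true (w1 l) with h1' | h1' <;>
            rcases Bool.eq_false_or_eq_true (w2 l) with h2' | h2' <;> simp [h1', h2']
        have eQ01 : Stmt16Aux4.WV (fun l => w1 l && w2 l) (fun l => !(w2 l))
            false true = w2 := by
          funext l; simp only [Stmt16Aux4.WV]
          rcases Bool.eq_false_or_eq_true (w1 l) with h1' | h1' <;>
            rcases Bool.eq_false_or_eq_true (w2 l) with h2' | h2' <;> simp [h1', h2']
        have eQ11 : Stmt16Aux4.WV (fun l => w1 l && w2 l) (fun l => !(w2 l))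
            true true = (fun _ => true) := by
          funext l; simp only [Stmt16Aux4.WV]
          rcases Bool.eq_false_or_eq_true (w1 l) with h1' | h1' <;>
            rcases Bool.eq_false_or_eq_true (w2 l) with h2' | h2' <;> simp [h1', h2']
        have hW10 : C (Stmt16Aux4.WV (fun l => w1 l && w2 l) (fun l => !(w2 l))
            true false) = true := by
          apply hup' w1 _ hw1
          intro l hl
          simp only [Stmt16Aux4.WV]
          rcases Bool.eq_false_or_eq_true (w2 l) with h2' | h2' <;> simp [hl, h2']
        exact ⟨_, fun a : Fin 4 → Bool => a 1 && (a 2 || a 3), by simp,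
          Stmt16Aux4.helper_C_OR C _ _ h0 h1 (by rw [eQ00]; exact hmf)
            (by rw [eQ01]; exact hw2) hW10 (by rw [eQ11]; exact h1)⟩
  · -- Case D : C0 = true, C1 = false
    by_cases hdown : ∃ s t, C s = true ∧ (∀ l, t l = true → s l = true) ∧ C t = false
    · obtain ⟨s, p, hs, hps, hp⟩ := hdown
      have eD00 : Stmt16Aux4.DV p s false false = (fun _ => false) := by
        funext l; simp only [Stmt16Aux4.DV]
        cases hp' : p l <;> cases hs' : s l <;> simp
      have eD10 : Stmt16Aux4.DV p s true false = p := by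
        funext l; simp only [Stmt16Aux4.DV]
        cases hp' : p l <;> cases hs' : s l <;> simp
      have eD11 : Stmt16Aux4.DV p s true true = s := by
        funext l; simp only [Stmt16Aux4.DV]
        cases hp' : p l
        · cases hs' : s l <;> simp
        · simp [hps l hp']
      exact ⟨_, fun a : Fin 4 → Bool => !a 0 && (a 2 == a 3), by simp,
        Stmt16Aux4.helper_D_EQ C p s h0 h1 (by rw [eD00]; exact h0)
          (by rw [eD10]; exact hp) (by rw [eD11]; exact hs)⟩
    · push_neg at hdown
      have hdown' : ∀ s t, C s = true → (∀ l, t l = true → s l = true) →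
          C t = true := by
        intro s t hs hst
        cases h : C t
        · exact absurd h (hdown s t hs hst)
        · rfl
      cases hal : w1 l₀ with
      | true =>
        exfalso
        have hbl : w2 l₀ = false := by
          cases h : w2 l₀
          · rfl
          · exact absurd (by rw [h, hal]) hne0
        have hcc : C (Function.update w1 l₀ (w2 l₀)) = true := by
          apply hdown' w1 _ hw1
          intro l hl
          rcases eq_or_ne l l₀ with rfl | hne
          · rw [Function.update_self, hbl] at hl
            exact Bool.noConfusion hl
          · rwa [Function.update_of_ne hne] at hl
        rw [hcc] at hwc
        exact Bool.noConfusion hwc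
      | false =>
        have hbl : w2 l₀ = true := by
          cases h : w2 l₀
          · exact absurd (by rw [h, hal]) hne0
          · rfl
        have hjf : C (fun l => w1 l || w2 l) = false := by
          cases h : C (fun l => w1 l || w2 l)
          · rfl
          · exfalso
            have hcc : C (Function.update w1 l₀ (w2 l₀)) = true := by
              apply hdown' (fun l => w1 l || w2 l) _ h
              intro l hl
              rcases eq_or_ne l l₀ with rfl | hne
              · rw [Function.update_self] at hl
                simp [hl]
              · rw [Function.update_of_ne hne] at hl
                simp [hl]
            rw [hcc] at hwc
            exact Bool.noConfusion hwc
        have eN00 : Stmt16Aux4.DV (fun l => w1 l && !(w2 l)) w2 false false =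
            (fun _ => false) := by
          funext l; simp only [Stmt16Aux4.DV]
          rcases Bool.eq_false_or_eq_true (w1 l) with h1' | h1' <;>
            rcases Bool.eq_false_or_eq_true (w2 l) with h2' | h2' <;> simp [h1', h2']
        have eN01 : Stmt16Aux4.DV (fun l => w1 l && !(w2 l)) w2 false true = w2 := by
          funext l; simp only [Stmt16Aux4.DV]
          rcases Bool.eq_false_or_eq_true (w1 l) with h1' | h1' <;>
            rcases Bool.eq_false_or_eq_true (w2 l) with h2' | h2' <;> simp [h1', h2']
        have eN11 : Stmt16Aux4.DV (fun l => w1 l && !(w2 l)) w2 true true =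
            (fun l => w1 l || w2 l) := by
          funext l; simp only [Stmt16Aux4.DV]
          rcases Bool.eq_false_or_eq_true (w1 l) with h1' | h1' <;>
            rcases Bool.eq_false_or_eq_true (w2 l) with h2' | h2' <;> simp [h1', h2']
        have hD10 : C (Stmt16Aux4.DV (fun l => w1 l && !(w2 l)) w2 true false) = true := by
          apply hdown' w1 _ hw1
          intro l hl
          simp only [Stmt16Aux4.DV] at hl
          cases h1' : w1 l
          · exfalso
            simp [h1'] at hl
          · rfl
        exact ⟨_, fun a : Fin 4 → Bool => !a 0 && (!a 2 || !a 3), by simp,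
          Stmt16Aux4.helper_D_NAND C _ _ h0 h1 (by rw [eN00]; exact h0)
            (by rw [eN01]; exact hw2) hD10 (by rw [eN11]; exact hjf)⟩
  · -- Case A : C0 = true, C1 = true
    push_neg at htrue
    obtain ⟨d, hd'⟩ := htrue
    have hd : C d = false := by
      cases h : C d
      · rfl
      · exact absurd h hd'
    exact ⟨_, fun a : Fin 4 → Bool => a 2 == a 3, by simp,
      Stmt16Aux4.helper_A C d h0 h1 hd⟩
end

section
/- Let n ≥ 2 and let G be a simple graph on the vertex set {0,1,…,n−1} without isolated vertices. Let P be the path graph on {0,1,…,n−1} with edges {j, j+1} for 0 ≤ j ≤ n−2. Then G has a Hamiltonian path (an ordering v_0, v_1, …, v_{n−1} of all vertices such that v_j and v_{j+1} are adjacent in G for every 0 ≤ j ≤ n−2) if and only if F_G isomorphically implies F_P. -/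
/-! Both sides say that the path graph embeds into `G` along a permutation. A Boolean assignment
satisfies `F_G` exactly when its true-set is a vertex cover of `G`, so `π(F_G) ⇒ F_P` says that
every set whose preimage under `π` covers `G` also covers `P`. That holds iff `P ≤ G.comap π⁻¹`:
an edge `uw` of `P` missing from `G.comap π⁻¹` is detected by the assignment that is false exactly
at `u` and `w`. Finally `pathGraph n ≤ G.comap e` says that `e` lists the vertices along a
Hamiltonian path of `G`. -/

namespace SimpleGraph

variable {V W : Type*}

theorem forall_isVertexCover_setOf_imp_iff_le [DecidableEq V] {G H : SimpleGraph V} :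
    (∀ a : V → Bool, G.IsVertexCover {v | a v} → H.IsVertexCover {v | a v}) ↔ H ≤ G := by
  refine ⟨fun h u w huw => ?_, fun hHG _ => IsVertexCover.mono hHG⟩
  by_contra hG
  have hcover : G.IsVertexCover {v | decide (v ≠ u ∧ v ≠ w)} := by
    intro x y hxy
    by_contra! hxy'
    simp only [Set.mem_ofPred_eq, decide_eq_true_eq, not_and_or, not_not] at hxy'
    obtain ⟨rfl | rfl, rfl | rfl⟩ := hxy'
    all_goals first | exact hxy.ne rfl | exact hG hxy | exact hG hxy.symm
  simpa [huw.ne] using h _ hcover huw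

theorem isVertexCover_preimage_iff_comap_symm {G : SimpleGraph V} (π : V ≃ W) {c : Set W} :
    G.IsVertexCover (π ⁻¹' c) ↔ (G.comap π.symm).IsVertexCover c :=
  ⟨fun h _ _ huw => by simpa using h huw, fun h _ _ hxy => h (by simpa using hxy)⟩

theorem pathGraph_le_comap_iff {G : SimpleGraph V} {n : ℕ} (f : Fin n → V) :
    pathGraph n ≤ G.comap f ↔ ∀ j : Fin n, ∀ hj : (j : ℕ) + 1 < n, G.Adj (f j) (f ⟨j + 1, hj⟩) := by
  refine ⟨fun h j hj => h (pathGraph_adj.2 (Or.inl rfl)), fun h u v huv => ?_⟩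
  rcases pathGraph_adj.1 huv with huv | huv
  · simpa [Fin.ext_iff, huv] using h u (huv ▸ v.isLt)
  · simpa [Fin.ext_iff, huv] using (h v (huv ▸ u.isLt)).symm

end SimpleGraph

open SimpleGraph in
theorem stmt_17_general (n : ℕ) (G P : SimpleGraph (Fin n))
    (hP : ∀ u v : Fin n, P.Adj u v ↔ ((u : ℕ) + 1 = (v : ℕ) ∨ (v : ℕ) + 1 = (u : ℕ)))
    (FG FP : (Fin n → Bool) → Bool)
    (hFG : ∀ a : Fin n → Bool, FG a = true ↔
      ∀ i j : Fin n, G.Adj i j → (a i = true ∨ a j = true))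
    (hFP : ∀ a : Fin n → Bool, FP a = true ↔
      ∀ i j : Fin n, P.Adj i j → (a i = true ∨ a j = true)) :
    (∃ e : Equiv.Perm (Fin n), ∀ j : Fin n, ∀ hj : (j : ℕ) + 1 < n,
        G.Adj (e j) (e ⟨(j : ℕ) + 1, hj⟩)) ↔
      (∃ π : Equiv.Perm (Fin n), ∀ a : Fin n → Bool, FG (a ∘ π) = true → FP a = true) := by
  obtain rfl : P = pathGraph n := by ext u v; rw [hP, pathGraph_adj]
  have hFG' : ∀ a, FG a = true ↔ G.IsVertexCover {v | a v} := hFG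
  have hFP' : ∀ a, FP a = true ↔ (pathGraph n).IsVertexCover {v | a v} := hFP
  have himp (π : Equiv.Perm (Fin n)) :
      (∀ a, FG (a ∘ π) = true → FP a = true) ↔ pathGraph n ≤ G.comap π.symm := by
    simp_rw [← forall_isVertexCover_setOf_imp_iff_le, hFP', hFG', ←
      isVertexCover_preimage_iff_comap_symm]
    rfl
  simp_rw [himp, pathGraph_le_comap_iff]
  exact ⟨fun ⟨e, he⟩ => ⟨e.symm, he⟩, fun ⟨π, hπ⟩ => ⟨π.symm, hπ⟩⟩

/-- For `n ≥ 2`, a graph `G` on `Fin n` without isolated vertices, and the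
path graph `P` on `Fin n` (edges `{j, j+1}`): `G` has a Hamiltonian path iff
`F_G ⇒̃ F_P`. -/
theorem stmt_17 (n : ℕ) (hn : 2 ≤ n) (G P : SimpleGraph (Fin n))
    (hGiso : ∀ v : Fin n, ∃ w : Fin n, G.Adj v w)
    (hP : ∀ u v : Fin n, P.Adj u v ↔ ((u : ℕ) + 1 = (v : ℕ) ∨ (v : ℕ) + 1 = (u : ℕ)))
    (FG FP : (Fin n → Bool) → Bool)
    (hFG : ∀ a : Fin n → Bool, FG a = true ↔
      ∀ i j : Fin n, G.Adj i j → (a i = true ∨ a j = true))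
    (hFP : ∀ a : Fin n → Bool, FP a = true ↔
      ∀ i j : Fin n, P.Adj i j → (a i = true ∨ a j = true)) :
    (∃ e : Equiv.Perm (Fin n), ∀ j : Fin n, ∀ hj : (j : ℕ) + 1 < n,
        G.Adj (e j) (e ⟨(j : ℕ) + 1, hj⟩)) ↔
      (∃ π : Equiv.Perm (Fin n), ∀ a : Fin n → Bool, FG (a ∘ π) = true → FP a = true) :=
  stmt_17_general n G P hP FG FP hFG hFP
end

section
/- Let n' ≥ 1 and n ≥ n' + 2 be integers, and let G be a simple graph on the vertex set {0,…,n'−1}. Let Ĝ be the simple graph on {0,…,n−1} whose edges are: all edges of G, the edges {j, n'} for every 0 ≤ j ≤ n'−1, and the edges {j, j+1} for every n' ≤ j ≤ n−2. Then Ĝ has a Hamiltonian path if and only if G has a Hamiltonian path, where a Hamiltonian path in a graph on m vertices is an ordering v_0, v_1, …, v_{m−1} of all vertices such that v_j and v_{j+1} are adjacent for every 0 ≤ j ≤ m−2. -/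
section PadAux

variable {n' n : ℕ}

/-- Extend a permutation of `Fin n'` to `Fin n` by the identity on the rest. -/
def padFun (hn : n' ≤ n) (e : Equiv.Perm (Fin n')) : Fin n → Fin n :=
  fun j => if h : (j : ℕ) < n' then ⟨(e ⟨j, h⟩ : ℕ), lt_of_lt_of_le (e ⟨j, h⟩).2 hn⟩ else j

lemma padFun_inj (hn : n' ≤ n) (e : Equiv.Perm (Fin n')) :
    Function.Injective (padFun hn e) := by
  intro a b hab
  unfold padFun at hab
  split_ifs at hab with ha hb hb
  · have h1 : (e ⟨a, ha⟩ : ℕ) = (e ⟨b, hb⟩ : ℕ) := Fin.mk_eq_mk.mp hab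
    have h2 : (a : ℕ) = (b : ℕ) := Fin.mk_eq_mk.mp (e.injective (Fin.ext h1))
    exact Fin.ext h2
  · exfalso
    have h1 : (e ⟨a, ha⟩ : ℕ) = (b : ℕ) := Fin.ext_iff.mp hab
    have h2 := (e ⟨a, ha⟩).2
    omega
  · exfalso
    have h1 : (a : ℕ) = (e ⟨b, hb⟩ : ℕ) := Fin.ext_iff.mp hab
    have h2 := (e ⟨b, hb⟩).2
    omega
  · exact hab

noncomputable def padPerm (hn : n' ≤ n) (e : Equiv.Perm (Fin n')) : Equiv.Perm (Fin n) :=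
  Equiv.ofBijective _ ((Finite.injective_iff_bijective).mp (padFun_inj hn e))

lemma padPerm_apply (hn : n' ≤ n) (e : Equiv.Perm (Fin n')) (j : Fin n) :
    padPerm hn e j = padFun hn e j := rfl

/-- Restrict a permutation of `Fin n` preserving `{k | k < n'}` to `Fin n'`. -/
def restFun (hn : n' ≤ n) (f : Equiv.Perm (Fin n))
    (hs : ∀ k : Fin n, (k : ℕ) < n' → (f k : ℕ) < n') : Fin n' → Fin n' :=
  fun j => ⟨(f ⟨j, lt_of_lt_of_le j.2 hn⟩ : ℕ), hs _ j.2⟩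

lemma restFun_inj (hn : n' ≤ n) (f : Equiv.Perm (Fin n))
    (hs : ∀ k : Fin n, (k : ℕ) < n' → (f k : ℕ) < n') :
    Function.Injective (restFun hn f hs) := by
  intro a b hab
  unfold restFun at hab
  have h1 : (f ⟨a, lt_of_lt_of_le a.2 hn⟩ : ℕ) = (f ⟨b, lt_of_lt_of_le b.2 hn⟩ : ℕ) :=
    Fin.mk_eq_mk.mp hab
  have h2 : (a : ℕ) = (b : ℕ) := Fin.mk_eq_mk.mp (f.injective (Fin.ext h1))
  exact Fin.ext h2

noncomputable def restPerm (hn : n' ≤ n) (f : Equiv.Perm (Fin n))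
    (hs : ∀ k : Fin n, (k : ℕ) < n' → (f k : ℕ) < n') : Equiv.Perm (Fin n') :=
  Equiv.ofBijective _ ((Finite.injective_iff_bijective).mp (restFun_inj hn f hs))

lemma restPerm_apply (hn : n' ≤ n) (f : Equiv.Perm (Fin n))
    (hs : ∀ k : Fin n, (k : ℕ) < n' → (f k : ℕ) < n') (j : Fin n') :
    restPerm hn f hs j = restFun hn f hs j := rfl

end PadAux

/-- For `n' ≥ 1` and `n ≥ n' + 2`, a graph `G` on `Fin n'`, and the padded
graph `Ĝ` on `Fin n` with edges: the edges of `G`, all edges `{j, n'}` for `j < n'`,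
and the edges `{j, j+1}` for `n' ≤ j ≤ n - 2`: `Ĝ` has a Hamiltonian path iff `G`
has a Hamiltonian path. -/
theorem stmt_18 (n' n : ℕ) (hn' : 1 ≤ n') (hn : n' + 2 ≤ n)
    (G : SimpleGraph (Fin n')) (Ghat : SimpleGraph (Fin n))
    (hGhat : ∀ u v : Fin n, Ghat.Adj u v ↔
      ((∃ (hu : (u : ℕ) < n') (hv : (v : ℕ) < n'), G.Adj ⟨u, hu⟩ ⟨v, hv⟩) ∨
       ((u : ℕ) < n' ∧ (v : ℕ) = n') ∨
       ((v : ℕ) < n' ∧ (u : ℕ) = n') ∨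
       (n' ≤ (u : ℕ) ∧ (v : ℕ) = (u : ℕ) + 1) ∨
       (n' ≤ (v : ℕ) ∧ (u : ℕ) = (v : ℕ) + 1))) :
    (∃ e : Equiv.Perm (Fin n), ∀ j : Fin n, ∀ hj : (j : ℕ) + 1 < n,
        Ghat.Adj (e j) (e ⟨(j : ℕ) + 1, hj⟩)) ↔
      (∃ e : Equiv.Perm (Fin n'), ∀ j : Fin n', ∀ hj : (j : ℕ) + 1 < n',
        G.Adj (e j) (e ⟨(j : ℕ) + 1, hj⟩)) := by
  have hn1 : n - 1 < n := by omega
  have hle : n' ≤ n := by omega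
  constructor
  · rintro ⟨e, he⟩
    -- cleaned-up form of the hypothesis
    have he' : ∀ a b : ℕ, ∀ (ha : a < n) (hb : b < n), b = a + 1 →
        Ghat.Adj (e ⟨a, ha⟩) (e ⟨b, hb⟩) := by
      intro a b ha hb hab
      subst hab
      exact he ⟨a, ha⟩ hb
    -- the only neighbor of the top vertex `n-1` is `n-2`
    have nbr : ∀ x : Fin n, Ghat.Adj x ⟨n - 1, hn1⟩ → (x : ℕ) = n - 2 := by
      intro x hx
      rw [hGhat] at hx
      have hxlt := x.2
      have hvval : ((⟨n - 1, hn1⟩ : Fin n) : ℕ) = n - 1 := rfl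
      rcases hx with ⟨hu, hv, _⟩ | ⟨h1, h2⟩ | ⟨h1, h2⟩ | ⟨h1, h2⟩ | ⟨h1, h2⟩ <;> omega
    -- the key lemma, assuming `n-1` sits at the last position
    have key : ∀ f : Equiv.Perm (Fin n),
        (∀ a b : ℕ, ∀ (ha : a < n) (hb : b < n), b = a + 1 →
          Ghat.Adj (f ⟨a, ha⟩) (f ⟨b, hb⟩)) →
        ((f.symm ⟨n - 1, hn1⟩ : ℕ) = n - 1) →
        ∃ e' : Equiv.Perm (Fin n'), ∀ j : Fin n', ∀ hj : (j : ℕ) + 1 < n',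
          G.Adj (e' j) (e' ⟨(j : ℕ) + 1, hj⟩) := by
      intro f hf hend
      -- vertices ≥ n' are fixed at their own positions
      have fix : ∀ t : ℕ, t ≤ n - 1 - n' → ∀ ht : n - 1 - t < n,
          (f ⟨n - 1 - t, ht⟩ : ℕ) = n - 1 - t := by
        intro t
        induction t using Nat.strong_induction_on with
        | _ t ih =>
          rcases Nat.eq_zero_or_pos t with rfl | hpos
          · intro _ ht
            have h1 : f.symm ⟨n - 1, hn1⟩ = ⟨n - 1 - 0, ht⟩ :=
              Fin.ext (show (f.symm ⟨n - 1, hn1⟩ : ℕ) = n - 1 - 0 by omega)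
            have h2 := f.apply_symm_apply (⟨n - 1, hn1⟩ : Fin n)
            rw [h1] at h2
            rw [h2]
            show n - 1 = n - 1 - 0
            omega
          · obtain ⟨s, rfl⟩ := Nat.exists_eq_succ_of_ne_zero (n := t) (by omega)
            intro hles ht
            show (f ⟨n - 1 - (s + 1), ht⟩ : ℕ) = n - 1 - (s + 1)
            have hles' : s + 1 ≤ n - 1 - n' := hles
            have hlt : n - 1 - s < n := by omega
            have ihs : (f ⟨n - 1 - s, hlt⟩ : ℕ) = n - 1 - s :=
              ih s (by omega) (by omega) hlt
            have hadj := hf (n - 1 - (s + 1)) (n - 1 - s) ht hlt (by omega)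
            rw [hGhat] at hadj
            have hxlt := (f ⟨n - 1 - (s + 1), ht⟩).2
            rcases hadj with ⟨hu, hv, _⟩ | ⟨h1, h2⟩ | ⟨h1, h2⟩ | ⟨h1, h2⟩ | ⟨h1, h2⟩
            · omega
            · omega
            · omega
            · omega
            · -- bad case : f (n-2-s) = n - s; contradicts injectivity
              exfalso
              rcases Nat.eq_zero_or_pos s with rfl | hs
              · omega
              · have h3 : n - 1 - (s - 1) < n := by omega
                have ihp : (f ⟨n - 1 - (s - 1), h3⟩ : ℕ) = n - 1 - (s - 1) :=
                  ih (s - 1) (by omega) (by omega) h3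
                have h4 : f ⟨n - 1 - (s + 1), ht⟩ = f ⟨n - 1 - (s - 1), h3⟩ :=
                  Fin.ext (by omega)
                have h5 : n - 1 - (s + 1) = n - 1 - (s - 1) :=
                  Fin.mk_eq_mk.mp (f.injective h4)
                omega
      -- small vertices go to small vertices
      have small : ∀ k : Fin n, (k : ℕ) < n' → (f k : ℕ) < n' := by
        intro k hk
        by_contra hge
        push_neg at hge
        have hm := (f k).2
        have h1 : n - 1 - (n - 1 - (f k : ℕ)) < n := by omega
        have h2 := fix (n - 1 - (f k : ℕ)) (by omega) h1
        have heq : f ⟨n - 1 - (n - 1 - (f k : ℕ)), h1⟩ = f k := Fin.ext (by omega)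
        have h3 : n - 1 - (n - 1 - (f k : ℕ)) = (k : ℕ) :=
          Fin.ext_iff.mp (f.injective heq)
        omega
      refine ⟨restPerm hle f small, ?_⟩
      intro j hj
      have hjn : (j : ℕ) < n := lt_of_lt_of_le j.2 hle
      have hj1n : (j : ℕ) + 1 < n := by omega
      have hadj := hf (j : ℕ) ((j : ℕ) + 1) hjn hj1n rfl
      rw [hGhat] at hadj
      have hsj : (f ⟨(j : ℕ), hjn⟩ : ℕ) < n' := small _ j.2
      have hsj1 : (f ⟨(j : ℕ) + 1, hj1n⟩ : ℕ) < n' := small _ hj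
      rcases hadj with ⟨hu, hv, hG⟩ | ⟨h1, h2⟩ | ⟨h1, h2⟩ | ⟨h1, h2⟩ | ⟨h1, h2⟩
      · show G.Adj (restFun hle f small j) (restFun hle f small ⟨(j : ℕ) + 1, hj⟩)
        have e1 : restFun hle f small j = ⟨(f ⟨(j : ℕ), hjn⟩ : ℕ), hu⟩ := Fin.ext rfl
        have e2 : restFun hle f small ⟨(j : ℕ) + 1, hj⟩ =
            ⟨(f ⟨(j : ℕ) + 1, hj1n⟩ : ℕ), hv⟩ := Fin.ext rfl
        rw [e1, e2]
        exact hG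
      · omega
      · omega
      · omega
      · omega
    -- now reduce to the case where n-1 is at an endpoint
    have hPend : (e.symm ⟨n - 1, hn1⟩ : ℕ) = 0 ∨ (e.symm ⟨n - 1, hn1⟩ : ℕ) = n - 1 := by
      by_contra hc
      push_neg at hc
      obtain ⟨hc0, hc1⟩ := hc
      have hp2 := (e.symm ⟨n - 1, hn1⟩).2
      have hlt1 : (e.symm ⟨n - 1, hn1⟩ : ℕ) - 1 < n := by omega
      have hlt2 : (e.symm ⟨n - 1, hn1⟩ : ℕ) + 1 < n := by omega
      have hltp : (e.symm ⟨n - 1, hn1⟩ : ℕ) < n := hp2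
      have h1 := he' ((e.symm ⟨n - 1, hn1⟩ : ℕ) - 1) (e.symm ⟨n - 1, hn1⟩ : ℕ) hlt1 hltp
        (by omega)
      have h2 := he' (e.symm ⟨n - 1, hn1⟩ : ℕ) ((e.symm ⟨n - 1, hn1⟩ : ℕ) + 1) hltp hlt2 rfl
      have hep : e ⟨(e.symm ⟨n - 1, hn1⟩ : ℕ), hltp⟩ = ⟨n - 1, hn1⟩ := by
        rw [show (⟨(e.symm ⟨n - 1, hn1⟩ : ℕ), hltp⟩ : Fin n) = e.symm ⟨n - 1, hn1⟩ from
          Fin.ext rfl]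
        exact e.apply_symm_apply _
      rw [hep] at h1 h2
      have k1 := nbr _ h1
      have k2 := nbr _ h2.symm
      have h3 : e ⟨(e.symm ⟨n - 1, hn1⟩ : ℕ) - 1, hlt1⟩ =
          e ⟨(e.symm ⟨n - 1, hn1⟩ : ℕ) + 1, hlt2⟩ := Fin.ext (by omega)
      have h5 : (e.symm ⟨n - 1, hn1⟩ : ℕ) - 1 = (e.symm ⟨n - 1, hn1⟩ : ℕ) + 1 :=
        Fin.mk_eq_mk.mp (e.injective h3)
      omega
    rcases hPend with h0 | hEnd
    · -- reverse the permutation first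
      set E : Equiv.Perm (Fin n) := Fin.revPerm.trans e with hE
      have hEapp : ∀ x : Fin n, E x = e (Fin.rev x) := fun x => rfl
      have hEprop : ∀ a b : ℕ, ∀ (ha : a < n) (hb : b < n), b = a + 1 →
          Ghat.Adj (E ⟨a, ha⟩) (E ⟨b, hb⟩) := by
        intro a b ha hb hab
        subst hab
        have r1 : E ⟨a, ha⟩ = e ⟨n - 1 - a, by omega⟩ := by
          rw [hEapp]
          congr 1
          exact Fin.ext (by simp [Fin.val_rev]; omega)
        have r2 : E ⟨a + 1, hb⟩ = e ⟨n - 2 - a, by omega⟩ := by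
          rw [hEapp]
          congr 1
          exact Fin.ext (by simp [Fin.val_rev]; omega)
        rw [r1, r2]
        exact (he' (n - 2 - a) (n - 1 - a) (by omega) (by omega) (by omega)).symm
      have hEsymm : (E.symm ⟨n - 1, hn1⟩ : ℕ) = n - 1 := by
        have h1 : E.symm ⟨n - 1, hn1⟩ = Fin.revPerm.symm (e.symm ⟨n - 1, hn1⟩) :=
          Equiv.symm_trans_apply _ _ _
        rw [h1, Fin.revPerm_symm]
        show ((e.symm ⟨n - 1, hn1⟩).rev : ℕ) = n - 1
        rw [Fin.val_rev]
        omega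
      exact key E hEprop hEsymm
    · exact key e he' hEnd
  · rintro ⟨e, he⟩
    have he' : ∀ a b : ℕ, ∀ (ha : a < n') (hb : b < n'), b = a + 1 →
        G.Adj (e ⟨a, ha⟩) (e ⟨b, hb⟩) := by
      intro a b ha hb hab
      subst hab
      exact he ⟨a, ha⟩ hb
    refine ⟨padPerm hle e, ?_⟩
    intro j hj
    rw [hGhat]
    have hjn := j.2
    have hv1 : ((⟨(j : ℕ) + 1, hj⟩ : Fin n) : ℕ) = (j : ℕ) + 1 := rfl
    by_cases h1 : (j : ℕ) + 1 < n'
    · have hjn' : (j : ℕ) < n' := by omega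
      have g1 : padPerm hle e j = ⟨(e ⟨(j : ℕ), hjn'⟩ : ℕ),
          lt_of_lt_of_le (e ⟨(j : ℕ), hjn'⟩).2 hle⟩ := by
        rw [padPerm_apply]
        unfold padFun
        rw [dif_pos (show ((j : Fin n) : ℕ) < n' from hjn')]
      have g2 : padPerm hle e ⟨(j : ℕ) + 1, hj⟩ = ⟨(e ⟨(j : ℕ) + 1, h1⟩ : ℕ),
          lt_of_lt_of_le (e ⟨(j : ℕ) + 1, h1⟩).2 hle⟩ := by
        rw [padPerm_apply]
        unfold padFun
        rw [dif_pos (show ((⟨(j : ℕ) + 1, hj⟩ : Fin n) : ℕ) < n' from h1)]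
      rw [g1, g2]
      refine Or.inl ⟨(e ⟨(j : ℕ), hjn'⟩).2, (e ⟨(j : ℕ) + 1, h1⟩).2, ?_⟩
      have hG := he' (j : ℕ) ((j : ℕ) + 1) hjn' h1 rfl
      convert hG using 2
    · by_cases h2 : (j : ℕ) + 1 = n'
      · -- edge from last G-vertex to n'
        have hjn' : (j : ℕ) < n' := by omega
        have g1 : padPerm hle e j = ⟨(e ⟨(j : ℕ), hjn'⟩ : ℕ),
            lt_of_lt_of_le (e ⟨(j : ℕ), hjn'⟩).2 hle⟩ := by
          rw [padPerm_apply]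
          unfold padFun
          rw [dif_pos (show ((j : Fin n) : ℕ) < n' from hjn')]
        have g2 : padPerm hle e ⟨(j : ℕ) + 1, hj⟩ = ⟨(j : ℕ) + 1, hj⟩ := by
          rw [padPerm_apply]
          unfold padFun
          rw [dif_neg (show ¬ ((⟨(j : ℕ) + 1, hj⟩ : Fin n) : ℕ) < n' by omega)]
        rw [g1, g2]
        refine Or.inr (Or.inl ⟨(e ⟨(j : ℕ), hjn'⟩).2, ?_⟩)
        show (j : ℕ) + 1 = n'
        exact h2
      · -- both positions ≥ n' : identity, consecutive edge
        have hge : n' ≤ (j : ℕ) := by omega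
        have g1 : padPerm hle e j = j := by
          rw [padPerm_apply]
          unfold padFun
          rw [dif_neg (show ¬ ((j : Fin n) : ℕ) < n' by omega)]
        have g2 : padPerm hle e ⟨(j : ℕ) + 1, hj⟩ = ⟨(j : ℕ) + 1, hj⟩ := by
          rw [padPerm_apply]
          unfold padFun
          rw [dif_neg (show ¬ ((⟨(j : ℕ) + 1, hj⟩ : Fin n) : ℕ) < n' by omega)]
        rw [g1, g2]
        exact Or.inr (Or.inr (Or.inr (Or.inl ⟨hge, rfl⟩)))
end

section
/- Let G be a simple graph on a finite vertex set V without isolated vertices, let t be a fresh variable not in V, and define the Boolean function F'_G over V ∪ {t} by F'_G(a) = a(t) ∧ ⋀_{{i,j} ∈ E(G)} (a(i) ∨ a(j)). Then for every variable z ∈ V ∪ {t}, F'_G implies the Boolean function a ↦ a(z) if and only if z = t. -/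
/-- For a graph `G` on finite `V` without isolated vertices and a fresh
variable `t` (modeled as `Sum.inr ()` in `V ⊕ Unit`), with
`F'_G(a) = a(t) ∧ ⋀_{{i,j} ∈ E(G)} (a(i) ∨ a(j))`: for every variable `z`,
`F'_G ⇒ (a ↦ a(z))` iff `z = t`. -/
theorem stmt_19 {V : Type*} [Fintype V] (G : SimpleGraph V)
    (hG : ∀ v : V, ∃ w : V, G.Adj v w)
    (FG : (V ⊕ Unit → Bool) → Bool)
    (hFG : ∀ a : V ⊕ Unit → Bool, FG a = true ↔
      (a (Sum.inr ()) = true ∧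
        ∀ i j : V, G.Adj i j → (a (Sum.inl i) = true ∨ a (Sum.inl j) = true))) :
    ∀ z : V ⊕ Unit,
      (∀ a : V ⊕ Unit → Bool, FG a = true → a z = true) ↔ z = Sum.inr () := by
  intro z
  constructor
  · intro h
    rcases z with v | u
    · exfalso
      classical
      set a : V ⊕ Unit → Bool := fun x => decide (x ≠ Sum.inl v) with ha
      have hFa : FG a = true := by
        rw [hFG]
        refine ⟨by simp [ha], fun i j hij => ?_⟩
        by_cases hiv : i = v
        · right
          simp [ha]
          rintro rfl
          exact G.irrefl (hiv ▸ hij)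
        · left; simp [ha, hiv]
      have := h a hFa
      simp [ha] at this
    · cases u; rfl
  · rintro rfl a ha
    exact ((hFG a).mp ha).1
end
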